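/- arXiv:2512.01332 — 6 statements merged into one kernel-verified Lean document; each statement's English description precedes it below -/
import Mathlib

section
/- Let P = y_1Δ⁰_{S_1} + ⋯ + y_mΔ⁰_{S_m} ⊂ ℝ^n where y_1,…,y_m are positive real numbers and S_1,…,S_m are admissible sets of signed vectors. If the point (x_1,…,x_n) lies in P, then for every (r_1,…,r_n) ∈ ℝ^n with 0 ≤ r_j ≤ 1 for all j ∈ [n], the point (r_1x_1,…,r_nx_n) also lies in P. -/
open Pointwise

noncomputable section

/-- The signed standard basis vector of `ℝ^n`: `(i, true) ↦ e i`, `(i, false) ↦ -e i`. -/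
def sgnVec (n : ℕ) (p : Fin n × Bool) : Fin n → ℝ :=
  if p.2 then Pi.single p.1 1 else -Pi.single p.1 1

/-- A set of signed vectors is admissible if it is nonempty and contains at most one of
`e i`, `-e i` for each `i`. -/
def Adm (n : ℕ) (S : Finset (Fin n × Bool)) : Prop :=
  S.Nonempty ∧ ∀ i : Fin n, ¬((i, true) ∈ S ∧ (i, false) ∈ S)

/-- `AdS_n`: admissible sets of size `n` (exactly one of `±e i` for each `i`). -/
def AdSn (n : ℕ) (T : Finset (Fin n × Bool)) : Prop :=
  T.card = n ∧ Adm n T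

/-- The simplex `Δ⁰_S := conv({0} ∪ S)`. -/
def simp0 (n : ℕ) (S : Finset (Fin n × Bool)) : Set (Fin n → ℝ) :=
  convexHull ℝ ({0} ∪ sgnVec n '' ↑S)

/-- The lattice points `ℤ^n ⊆ ℝ^n`. -/
def latt (n : ℕ) : Set (Fin n → ℝ) := {x | ∀ j, ∃ z : ℤ, x j = (z : ℝ)}

/-- Minkowski difference `A − B := {x : x + B ⊆ A}`. -/
def mdiff {n : ℕ} (A B : Set (Fin n → ℝ)) : Set (Fin n → ℝ) :=
  {x | ∀ b ∈ B, x + b ∈ A}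

/-!
Coordinatewise scaling `v ↦ r * v` with `0 ≤ r ≤ 1` is linear and sends every signed basis
vector `±e i` to the point `r i • (±e i)` of the segment from `0` to it. A linear map sending the
generators of a convex hull into that hull preserves the hull, so it maps each `Δ⁰_S` into itself,
and, being additive and commuting with scalars, it then maps every Minkowski combination
`∑ y i • Δ⁰_{S i}` into itself.
-/

theorem LinearMap.mapsTo_convexHull_of_mapsTo {𝕜 E : Type*} [Semiring 𝕜] [PartialOrder 𝕜]
    [AddCommMonoid E] [Module 𝕜 E] (f : E →ₗ[𝕜] E) {s : Set E}
    (hf : Set.MapsTo f s (convexHull 𝕜 s)) :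
    Set.MapsTo f (convexHull 𝕜 s) (convexHull 𝕜 s) := by
  rw [Set.mapsTo_iff_image_subset, f.image_convexHull]
  exact convexHull_min hf.image_subset (convex_convexHull 𝕜 s)

theorem LinearMap.mapsTo_convexHull_zero_union {𝕜 E : Type*} [Ring 𝕜] [PartialOrder 𝕜]
    [AddRightMono 𝕜] [AddCommGroup E] [Module 𝕜 E] (f : E →ₗ[𝕜] E) {s : Set E}
    (hf : ∀ v ∈ s, ∃ t ∈ Set.Icc (0 : 𝕜) 1, f v = t • v) :
    Set.MapsTo f (convexHull 𝕜 ({0} ∪ s)) (convexHull 𝕜 ({0} ∪ s)) := by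
  refine f.mapsTo_convexHull_of_mapsTo ?_
  have hzero : (0 : E) ∈ convexHull 𝕜 ({0} ∪ s) :=
    subset_convexHull 𝕜 _ (Set.mem_union_left _ rfl)
  rintro v (rfl | hv)
  · simpa using hzero
  · obtain ⟨t, ht, hfv⟩ := hf v hv
    rw [hfv]
    exact (convex_convexHull 𝕜 _).smul_mem_of_zero_mem hzero
      (subset_convexHull 𝕜 _ (Set.mem_union_right _ hv)) ht

theorem LinearMap.mapsTo_sum_smul {ι R M : Type*} [Fintype ι] [Semiring R] [AddCommMonoid M]
    [Module R M] (f : M →ₗ[R] M) (c : ι → R) {A : ι → Set M}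
    (hf : ∀ i, Set.MapsTo f (A i) (A i)) :
    Set.MapsTo f (∑ i, c i • A i) (∑ i, c i • A i) := by
  intro x hx
  rw [Set.mem_fintype_sum] at hx ⊢
  obtain ⟨g, hg, rfl⟩ := hx
  refine ⟨fun i => f (g i), fun i => ?_, (map_sum f g _).symm⟩
  obtain ⟨a, ha, hga⟩ := Set.mem_smul_set.mp (hg i)
  show f (g i) ∈ _
  rw [← hga, f.map_smul]
  exact Set.smul_mem_smul_set (hf i ha)

theorem mul_sgnVec (n : ℕ) (r : Fin n → ℝ) (p : Fin n × Bool) :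
    r * sgnVec n p = r p.1 • sgnVec n p := by
  funext j
  by_cases h : j = p.1 <;> rcases p with ⟨i, _ | _⟩ <;>
    simp_all [sgnVec]

theorem mapsTo_mul_simp0 (n : ℕ) (S : Finset (Fin n × Bool)) {r : Fin n → ℝ}
    (hr : ∀ j, 0 ≤ r j ∧ r j ≤ 1) :
    Set.MapsTo (r * ·) (simp0 n S) (simp0 n S) := by
  refine (LinearMap.mulLeft ℝ r).mapsTo_convexHull_zero_union ?_
  rintro _ ⟨p, -, rfl⟩
  exact ⟨r p.1, hr p.1, mul_sgnVec n r p⟩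

theorem stmt1_general (n m : ℕ) (y : Fin m → ℝ)
    (S : Fin m → Finset (Fin n × Bool))
    (x : Fin n → ℝ) (hx : x ∈ ∑ i : Fin m, y i • simp0 n (S i))
    (r : Fin n → ℝ) (hr : ∀ j, 0 ≤ r j ∧ r j ≤ 1) :
    (fun j => r j * x j) ∈ ∑ i : Fin m, y i • simp0 n (S i) :=
  (LinearMap.mulLeft ℝ r).mapsTo_sum_smul y (fun i => mapsTo_mul_simp0 n (S i) hr) hx

/-- If `P = y_1Δ⁰_{S_1} + ⋯ + y_mΔ⁰_{S_m}` with `y_i > 0` real and `S_i` admissible,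
and `(x_1,…,x_n) ∈ P`, then for any `r` with `0 ≤ r_j ≤ 1` the point `(r_1x_1,…,r_nx_n) ∈ P`. -/
theorem stmt1 (n m : ℕ) (y : Fin m → ℝ) (hy : ∀ i, 0 < y i)
    (S : Fin m → Finset (Fin n × Bool)) (hS : ∀ i, Adm n (S i))
    (x : Fin n → ℝ) (hx : x ∈ ∑ i : Fin m, y i • simp0 n (S i))
    (r : Fin n → ℝ) (hr : ∀ j, 0 ≤ r j ∧ r j ≤ 1) :
    (fun j => r j * x j) ∈ ∑ i : Fin m, y i • simp0 n (S i) :=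
  stmt1_general n m y S x hx r hr
end
end

section
/- Let P = y_1Δ⁰_{S_1} + ⋯ + y_mΔ⁰_{S_m} ⊂ ℝ^n where y_1,…,y_m are positive real numbers and S_1,…,S_m are admissible sets of signed vectors. Then for every T ∈ AdS_n, the polytope P_T := y_1Δ⁰_{S_1∩T} + ⋯ + y_mΔ⁰_{S_m∩T} equals P ∩ ℝ_T, the intersection of P with the closed octant associated to T. -/
/-!
A point lies in `Δ⁰_S` exactly when its `ℓ¹`-norm is at most `1` and the sign of each nonzero
coordinate is one allowed by `S`. Since `T ∈ AdS_n` allows exactly one sign per coordinate, this gives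
`Δ⁰_{S ∩ T} = Δ⁰_S ∩ ℝ_T`, and the claim becomes `∑ yᵢ (Aᵢ ∩ ℝ_T) = (∑ yᵢ Aᵢ) ∩ ℝ_T` for sets `Aᵢ`
that are stable under scaling each coordinate by a factor in `[0, 1]`. For `⊇`, write
`x = ∑ yᵢ fᵢ ∈ ℝ_T`; in each coordinate `k`, drop the summands `yᵢ fᵢₖ` of the wrong sign and scale
the others by one common factor in `[0, 1]` so that they still add up to `xₖ`.
-/

open Pointwise

noncomputable section

/-- The closed octant `ℝ_T := {x : x·v ≥ 0 for all v ∈ T}` associated to `T ∈ AdS_n`. -/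
def octant (n : ℕ) (T : Finset (Fin n × Bool)) : Set (Fin n → ℝ) :=
  {x | ∀ p ∈ T, 0 ≤ ∑ j, x j * sgnVec n p j}


section MinkowskiSum

open Finset

theorem Convex.sum_smul_mem_of_zero_mem {ι E : Type*} [Fintype ι] [AddCommGroup E] [Module ℝ E]
    {s : Set E} (hs : Convex ℝ s) (h0 : (0 : E) ∈ s) {w : ι → ℝ} {z : ι → E}
    (hw₀ : ∀ i, 0 ≤ w i) (hw₁ : ∑ i, w i ≤ 1) (hz : ∀ i, z i ∈ s) : ∑ i, w i • z i ∈ s := by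
  have := hs.sum_mem (t := univ) (w := fun o : Option ι => o.elim (1 - ∑ i, w i) w)
    (z := fun o : Option ι => o.elim 0 z) (by rintro (_ | i) _ <;> simp [hw₀, hw₁])
    (by simp [Fintype.sum_option]) (by rintro (_ | i) _ <;> simp [h0, hz])
  simpa [Fintype.sum_option] using this

theorem mem_sum_smul_set_iff {ι E : Type*} [Fintype ι] [AddCommMonoid E] [Module ℝ E]
    (y : ι → ℝ) (A : ι → Set E) (x : E) :
    x ∈ ∑ i, y i • A i ↔ ∃ f : ι → E, (∀ i, f i ∈ A i) ∧ ∑ i, y i • f i = x := by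
  rw [Set.mem_fintype_sum]
  constructor
  · rintro ⟨g, hg, rfl⟩
    choose f hf hgf using fun i => Set.mem_smul_set.1 (hg i)
    exact ⟨f, hf, by simp [hgf]⟩
  · rintro ⟨f, hf, rfl⟩
    exact ⟨fun i => y i • f i, fun i => Set.smul_mem_smul_set (hf i), rfl⟩

theorem exists_mul_nonneg_sum_eq {ι : Type*} [Fintype ι] (u : ι → ℝ) (s : ℝ)
    (h : 0 ≤ s * ∑ i, u i) :
    ∃ c : ι → ℝ, (∀ i, c i ∈ Set.Icc 0 1) ∧ (∀ i, 0 ≤ s * (c i * u i)) ∧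
      ∑ i, c i * u i = ∑ i, u i := by
  rcases eq_or_ne s 0 with rfl | hs
  · exact ⟨1, fun i => by simp, fun i => by simp, by simp⟩
  set X := s * ∑ i, u i
  set P := ∑ i, max (s * u i) 0
  have hXP : X ≤ P := by
    simp only [X, P, mul_sum]; exact sum_le_sum fun i _ => le_max_left _ _
  have hP : 0 ≤ P := sum_nonneg fun i _ => le_max_right _ _
  have hc : ∀ i, s * ((if 0 ≤ s * u i then X / P else 0) * u i) = X / P * max (s * u i) 0 := by
    intro i
    split_ifs with hi
    · rw [max_eq_left hi]; ring
    · rw [max_eq_right (not_le.1 hi).le]; ring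
  refine ⟨fun i => if 0 ≤ s * u i then X / P else 0, fun i => ?_, fun i => ?_, ?_⟩
  · have : X / P ∈ Set.Icc 0 1 := ⟨div_nonneg h hP, div_le_one_of_le₀ hXP hP⟩
    dsimp only
    split_ifs
    exacts [this, ⟨le_rfl, zero_le_one⟩]
  · rw [hc]; exact mul_nonneg (div_nonneg h hP) (le_max_right _ _)
  · apply mul_left_cancel₀ hs
    rw [mul_sum]
    simp_rw [hc]
    rw [← mul_sum, div_mul_cancel_of_imp fun hP0 => le_antisymm (hP0 ▸ hXP) h]

def signedOrthant {κ : Type*} (s : κ → ℝ) : Set (κ → ℝ) := {x | ∀ k, 0 ≤ s k * x k}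

theorem sum_smul_inter_signedOrthant {ι κ : Type*} [Fintype ι] (y : ι → ℝ) (hy : ∀ i, 0 < y i)
    (A : ι → Set (κ → ℝ))
    (hA : ∀ i, ∀ f ∈ A i, ∀ c : κ → ℝ, (∀ k, c k ∈ Set.Icc 0 1) → c * f ∈ A i)
    (s : κ → ℝ) :
    ∑ i, y i • (A i ∩ signedOrthant s) = (∑ i, y i • A i) ∩ signedOrthant s := by
  ext x
  simp only [Set.mem_inter_iff, mem_sum_smul_set_iff]
  constructor
  · rintro ⟨f, hf, rfl⟩
    refine ⟨⟨f, fun i => (hf i).1, rfl⟩, fun k => ?_⟩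
    simp only [Finset.sum_apply, Pi.smul_apply, smul_eq_mul, mul_sum]
    exact sum_nonneg fun i _ => by
      rw [mul_left_comm]; exact mul_nonneg (hy i).le ((hf i).2 k)
  · rintro ⟨⟨f, hf, rfl⟩, hx⟩
    have hsum : ∀ k, (∑ i, y i • f i) k = ∑ i, y i * f i k := fun k => by simp
    choose c hc₀₁ hcs hcsum using fun k =>
      exists_mul_nonneg_sum_eq (fun i => y i * f i k) (s k) (hsum k ▸ hx k)
    refine ⟨fun i => (fun k => c k i) * f i, fun i => ⟨hA i _ (hf i) _ fun k => hc₀₁ k i,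
      fun k => ?_⟩, ?_⟩
    · refine (mul_nonneg_iff_of_pos_left (hy i)).1 ?_
      simpa [mul_left_comm] using hcs k i
    · funext k
      rw [hsum, ← hcsum k]
      simp [mul_left_comm]

end MinkowskiSum

section SignedSimplex

open Matrix

variable {n : ℕ}

theorem sgnVec_eq_single (k : Fin n) (c : Bool) :
    sgnVec n (k, c) = Pi.single k (if c then 1 else -1) := by
  cases c <;> simp [sgnVec, Pi.single_neg]

theorem dotProduct_sgnVec (x : Fin n → ℝ) (k : Fin n) (c : Bool) :
    x ⬝ᵥ sgnVec n (k, c) = (if c then 1 else -1) * x k := by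
  rw [sgnVec_eq_single, dotProduct_single, mul_comm]

theorem convex_setOf_sum_abs_le_one {κ : Type*} [Fintype κ] :
    Convex ℝ {x : κ → ℝ | ∑ k, |x k| ≤ 1} := by
  intro u hu v hv a b ha hb hab
  calc ∑ k, |a * u k + b * v k| ≤ ∑ k, (a * |u k| + b * |v k|) :=
        Finset.sum_le_sum fun k _ => (abs_add_le _ _).trans_eq
          (by rw [abs_mul, abs_mul, abs_of_nonneg ha, abs_of_nonneg hb])
    _ = a * ∑ k, |u k| + b * ∑ k, |v k| := by
        rw [Finset.sum_add_distrib, Finset.mul_sum, Finset.mul_sum]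
    _ ≤ a * 1 + b * 1 := by gcongr; exacts [hu, hv]
    _ = 1 := by rw [mul_one, mul_one, hab]

theorem mem_simp0 {S : Finset (Fin n × Bool)} {x : Fin n → ℝ} :
    x ∈ simp0 n S ↔ (∑ j, |x j|) ≤ 1 ∧ ∀ p ∉ S, x ⬝ᵥ sgnVec n p ≤ 0 := by
  constructor
  · refine fun hx => convexHull_min
      (t := {y : Fin n → ℝ | (∑ j, |y j|) ≤ 1 ∧ ∀ p ∉ S, y ⬝ᵥ sgnVec n p ≤ 0}) ?_ ?_ hx
    · rintro _ (rfl | ⟨⟨k, c⟩, hp, rfl⟩)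
      · simp
      refine ⟨by cases c <;> simp [sgnVec_eq_single, Pi.single_apply, apply_ite abs], ?_⟩
      rintro ⟨k', c'⟩ hp'
      rw [dotProduct_sgnVec, sgnVec_eq_single]
      rcases eq_or_ne k' k with rfl | hk
      · cases c <;> cases c' <;> simp_all
      · simp [hk]
    · refine convex_setOf_sum_abs_le_one.inter ?_
      intro u hu v hv a b ha hb _ p hp
      rw [add_dotProduct, smul_dotProduct, smul_dotProduct, smul_eq_mul, smul_eq_mul]
      exact add_nonpos (mul_nonpos_of_nonneg_of_nonpos ha (hu p hp))
        (mul_nonpos_of_nonneg_of_nonpos hb (hv p hp))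
  · rintro ⟨h₁, h₂⟩
    have hx : x = ∑ j, |x j| • Pi.single j (SignType.sign (x j) : ℝ) := by
      simp [← Pi.single_smul, abs_mul_sign, Finset.univ_sum_single]
    rw [hx]
    have h₀ : (0 : Fin n → ℝ) ∈ simp0 n S := subset_convexHull ℝ _ (Or.inl rfl)
    refine (convex_convexHull ℝ _).sum_smul_mem_of_zero_mem h₀ (fun j => abs_nonneg _) h₁
      fun j => subset_convexHull ℝ _ ?_
    have hS : ∀ c, (j, c) ∉ S → (if c then 1 else -1) * x j ≤ 0 := fun c hc =>
      dotProduct_sgnVec x j c ▸ h₂ _ hc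
    rcases lt_trichotomy (x j) 0 with h | h | h
    · refine Or.inr ⟨(j, false), by_contra fun hj => ?_, by simp [sgnVec_eq_single, h]⟩
      simpa [h.not_ge] using hS false hj
    · simp [h]
    · refine Or.inr ⟨(j, true), by_contra fun hj => ?_, by simp [sgnVec_eq_single, h]⟩
      simpa [h.not_ge] using hS true hj

theorem mul_mem_simp0 {S : Finset (Fin n × Bool)} {x c : Fin n → ℝ} (hx : x ∈ simp0 n S)
    (hc : ∀ k, c k ∈ Set.Icc 0 1) : c * x ∈ simp0 n S := by
  obtain ⟨h₁, h₂⟩ := mem_simp0.1 hx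
  refine mem_simp0.2 ⟨le_trans (Finset.sum_le_sum fun k _ => ?_) h₁, fun ⟨k, b⟩ hp => ?_⟩
  · rw [Pi.mul_apply, abs_mul, abs_of_nonneg (hc k).1]
    exact mul_le_of_le_one_left (abs_nonneg _) (hc k).2
  · have := h₂ _ hp
    rw [dotProduct_sgnVec] at this ⊢
    rw [Pi.mul_apply, mul_left_comm]
    exact mul_nonpos_of_nonneg_of_nonpos (hc k).1 this

theorem AdSn.exists_sign {T : Finset (Fin n × Bool)} (hT : AdSn n T) :
    ∃ b : Fin n → Bool, ∀ k c, (k, c) ∈ T ↔ c = b k := by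
  obtain ⟨hcard, -, hadm⟩ := hT
  have huniq : ∀ k c c', (k, c) ∈ T → (k, c') ∈ T → c = c' := by
    intro k c c' h h'
    cases c <;> cases c' <;> simp_all
  have hfst : T.image Prod.fst = Finset.univ := by
    refine Finset.eq_univ_of_card _ ?_
    rw [Finset.card_image_of_injOn, hcard, Fintype.card_fin]
    rintro ⟨k, c⟩ h ⟨k', c'⟩ h' (rfl : k = k')
    rw [huniq k c c' h h']
  have hex : ∀ k, ∃ c, (k, c) ∈ T := fun k => by
    obtain ⟨⟨k', c⟩, hp, rfl⟩ := Finset.mem_image.1 (hfst ▸ Finset.mem_univ k)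
    exact ⟨c, hp⟩
  choose b hb using hex
  exact ⟨b, fun k c => ⟨fun h => huniq k c (b k) h (hb k), fun h => h ▸ hb k⟩⟩

theorem octant_eq_signedOrthant {T : Finset (Fin n × Bool)} {b : Fin n → Bool}
    (hb : ∀ k c, (k, c) ∈ T ↔ c = b k) :
    octant n T = signedOrthant fun k => if b k then 1 else -1 := by
  ext x
  change (∀ p ∈ T, 0 ≤ x ⬝ᵥ sgnVec n p) ↔ _
  simp only [Prod.forall, hb, forall_eq, dotProduct_sgnVec]
  rfl

theorem simp0_inter_eq {S T : Finset (Fin n × Bool)} {b : Fin n → Bool}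
    (hb : ∀ k c, (k, c) ∈ T ↔ c = b k) :
    simp0 n (S ∩ T) = simp0 n S ∩ octant n T := by
  have hoctant : ∀ x : Fin n → ℝ, (∀ p ∉ T, x ⬝ᵥ sgnVec n p ≤ 0) ↔ x ∈ octant n T := by
    intro x
    rw [octant_eq_signedOrthant hb]
    simp only [Prod.forall, hb, dotProduct_sgnVec, signedOrthant]
    refine forall_congr' fun k => ?_
    cases b k <;> simp
  ext x
  simp only [Set.mem_inter_iff, mem_simp0, Finset.mem_inter, not_and_or, or_imp, forall_and,
    ← hoctant]
  tauto

end SignedSimplex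

theorem stmt2_general (n m : ℕ) (y : Fin m → ℝ) (hy : ∀ i, 0 < y i)
    (S : Fin m → Finset (Fin n × Bool))
    (T : Finset (Fin n × Bool)) (hT : AdSn n T) :
    (∑ i : Fin m, y i • simp0 n (S i ∩ T)) =
      (∑ i : Fin m, y i • simp0 n (S i)) ∩ octant n T := by
  obtain ⟨b, hb⟩ := hT.exists_sign
  simp only [simp0_inter_eq hb, octant_eq_signedOrthant hb]
  exact sum_smul_inter_signedOrthant y hy _ (fun i _ hx _ hc => mul_mem_simp0 hx hc) _

/-- If `P = y_1Δ⁰_{S_1} + ⋯ + y_mΔ⁰_{S_m}` with `y_i > 0` real and `S_i` admissible,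
then for every `T ∈ AdS_n`, `P_T := y_1Δ⁰_{S_1∩T} + ⋯ + y_mΔ⁰_{S_m∩T}` equals `P ∩ ℝ_T`. -/
theorem stmt2 (n m : ℕ) (y : Fin m → ℝ) (hy : ∀ i, 0 < y i)
    (S : Fin m → Finset (Fin n × Bool)) (hS : ∀ i, Adm n (S i))
    (T : Finset (Fin n × Bool)) (hT : AdSn n T) :
    (∑ i : Fin m, y i • simp0 n (S i ∩ T)) =
      (∑ i : Fin m, y i • simp0 n (S i)) ∩ octant n T :=
  stmt2_general n m y hy S T hT
end
end

section
/- Let T ∈ AdS_n and P = y_1Δ⁰_{S_1} + ⋯ + y_mΔ⁰_{S_m} ⊂ ℝ^n where y_1,…,y_m are positive integers and S_1,…,S_m are admissible sets of signed vectors. For each i let I_i := {0} ∪ {j ∈ [n] : e_j ∈ T and e_j ∈ S_i, or −e_j ∈ T and −e_j ∈ S_i} ⊆ {0,1,…,n}, and let Q_T := y_1Δ_{I_1} + ⋯ + y_mΔ_{I_m} ⊂ ℝ^{{0,1,…,n}}, where Δ_I := conv(f_j : j ∈ I) with f_0, f_1,…,f_n the standard basis of ℝ^{{0,1,…,n}}.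 Define the linear projection φ_T : ℝ^{{0,1,…,n}} → ℝ^n by φ_T(x_0,x_1,…,x_n) := Σ_{v ∈ T} x_{i(v)} v, where i(±e_j) := j. Then φ_T maps Q_T onto P_T := y_1Δ⁰_{S_1∩T} + ⋯ + y_mΔ⁰_{S_m∩T}, φ_T is injective on the affine hull of Q_T, and φ_T restricts to a bijection from the lattice points Q_T ∩ ℤ^{{0,1,…,n}} onto the lattice points P_T ∩ ℤ^n. In particular, P_T is integrally equivalent to the type A generalized permutohedron Q_T. -/
open Pointwise

noncomputable section

/-- The simplex `Δ_I := conv(f_j : j ∈ I)` in `ℝ^N` on the standard basis vectors indexed by `I`. -/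
def simpA (N : ℕ) (I : Finset (Fin N)) : Set (Fin N → ℝ) :=
  convexHull ℝ ((fun j => Pi.single j (1 : ℝ)) '' ↑I)

/-- The linear projection `φ_T : ℝ^{0,1,…,n} → ℝ^n`, `φ_T(x) = Σ_{v ∈ T} x_{i(v)} v`,
where `i(±e_j) := j` (the index `j ∈ [n]` corresponds to `j.succ : Fin (n+1)`,
and `0 : Fin (n+1)` is the extra coordinate). -/
def phiT (n : ℕ) (T : Finset (Fin n × Bool)) (x : Fin (n + 1) → ℝ) : Fin n → ℝ :=
  ∑ p ∈ T, x p.1.succ • sgnVec n p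

/-! Since `T` holds exactly one of `±e_j` for each `j`, `φ_T` is, up to signs of coordinates,
the projection forgetting `x_0`: it kills `f_0` and sends `f_j` to the vector of `T` at `j`, so
by linearity it maps each `Δ_{I_i}` onto `Δ⁰_{S_i ∩ T}` and `Q_T` onto `P_T`. Every point of `Q_T`,
hence of its affine hull, has coordinate sum `∑ y_i`, which recovers `x_0` from the other
coordinates; this gives injectivity, and as the signs are `±1` and `∑ y_i ∈ ℤ`, integrality
passes in both directions. -/

def coordSum (ι : Type*) [Fintype ι] : (ι → ℝ) →ₗ[ℝ] ℝ := ∑ j, LinearMap.proj j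

@[simp]
lemma coordSum_apply {ι : Type*} [Fintype ι] (x : ι → ℝ) : coordSum ι x = ∑ j, x j := by
  simp [coordSum]

lemma AffineMap.apply_eq_of_mem_affineSpan {k V₁ P₁ V₂ P₂ : Type*} [Ring k]
    [AddCommGroup V₁] [Module k V₁] [AddTorsor V₁ P₁] [AddCommGroup V₂] [Module k V₂]
    [AddTorsor V₂ P₂] (f : P₁ →ᵃ[k] P₂) {s : Set P₁} {c : P₂} (h : ∀ x ∈ s, f x = c)
    {x : P₁} (hx : x ∈ affineSpan k s) : f x = c := by
  have hle : affineSpan k s ≤ (affineSpan k {c}).comap f :=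
    affineSpan_le.mpr fun x hx => by simp [h x hx]
  simpa [AffineSubspace.mem_comap] using hle hx

lemma map_eq_sum_of_mem_finsetSum {ι V W F : Type*} [AddCommMonoid V] [AddCommMonoid W]
    [FunLike F V W] [AddMonoidHomClass F V W] (f : F) {s : Finset ι} {A : ι → Set V}
    {c : ι → W} (h : ∀ i ∈ s, ∀ x ∈ A i, f x = c i) {x : V} (hx : x ∈ ∑ i ∈ s, A i) :
    f x = ∑ i ∈ s, c i := by
  have hsub : f '' ∑ i ∈ s, A i ⊆ ∑ i ∈ s, ({c i} : Set W) := by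
    rw [Set.image_finsetSum]
    exact Set.finsetSum_subset_finsetSum _ _ _ fun i hi => by
      rintro _ ⟨x, hx, rfl⟩
      exact h i hi x hx
  simpa [Set.finsetSum_singleton] using hsub ⟨x, hx, rfl⟩

lemma sum_eq_one_of_mem_simpA {N : ℕ} {I : Finset (Fin N)} {x : Fin N → ℝ}
    (hx : x ∈ simpA N I) : ∑ j, x j = 1 := by
  have hsub : simpA N I ⊆ {x | coordSum (Fin N) x = 1} := by
    refine convexHull_min ?_ (convex_hyperplane (coordSum (Fin N)).isLinear 1)
    rintro _ ⟨j, -, rfl⟩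
    simp
  simpa using hsub hx

lemma sum_eq_of_mem_sum_smul_simpA {N : ℕ} {ι : Type*} {s : Finset ι} {y : ι → ℝ}
    {I : ι → Finset (Fin N)} {x : Fin N → ℝ} (hx : x ∈ ∑ i ∈ s, y i • simpA N (I i)) :
    ∑ j, x j = ∑ i ∈ s, y i := by
  simpa using map_eq_sum_of_mem_finsetSum (coordSum (Fin N)) (fun i _ => by
    rintro _ ⟨a, ha, rfl⟩
    simp [sum_eq_one_of_mem_simpA ha]) hx

lemma Adm.injOn_fst {n : ℕ} {S : Finset (Fin n × Bool)} (hS : Adm n S) :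
    Set.InjOn Prod.fst (S : Set (Fin n × Bool)) := by
  rintro ⟨i, b⟩ hp ⟨j, c⟩ hq (rfl : i = j)
  cases b <;> cases c
  · rfl
  · exact absurd ⟨hq, hp⟩ (hS.2 i)
  · exact absurd ⟨hp, hq⟩ (hS.2 i)
  · rfl

section phiT

variable {n : ℕ} {T : Finset (Fin n × Bool)}

def phiTLinear (n : ℕ) (T : Finset (Fin n × Bool)) : (Fin (n + 1) → ℝ) →ₗ[ℝ] (Fin n → ℝ) where
  toFun := phiT n T
  map_add' x y := by simp only [phiT, Pi.add_apply, add_smul, Finset.sum_add_distrib]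
  map_smul' c x := by simp only [phiT, Pi.smul_apply, smul_eq_mul, mul_smul, Finset.smul_sum,
    RingHom.id_apply]

@[simp]
lemma coe_phiTLinear : ⇑(phiTLinear n T) = phiT n T := rfl

lemma phiT_single_zero : phiT n T (Pi.single 0 1) = 0 :=
  Finset.sum_eq_zero fun p _ => by simp

lemma phiT_single_succ (hT : Set.InjOn Prod.fst (T : Set (Fin n × Bool)))
    {p : Fin n × Bool} (hp : p ∈ T) : phiT n T (Pi.single p.1.succ 1) = sgnVec n p := by
  rw [phiT, Finset.sum_eq_single_of_mem p hp fun q hq hqp => ?_]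
  · simp
  have hne : q.1.succ ≠ p.1.succ := fun h => hqp (hT hq hp (Fin.succ_injective n h))
  simp [Pi.single_eq_of_ne hne]

lemma phiT_apply_of_mem (hT : Set.InjOn Prod.fst (T : Set (Fin n × Bool))) {j : Fin n}
    {b : Bool} (hjb : (j, b) ∈ T) (x : Fin (n + 1) → ℝ) :
    phiT n T x j = if b then x j.succ else -x j.succ := by
  rw [phiT, Finset.sum_apply, Finset.sum_eq_single_of_mem (j, b) hjb fun q hq hqj => ?_]
  · cases b <;> simp [sgnVec]
  have hne : q.1 ≠ j := fun h => hqj (hT hq hjb h)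
  simp only [sgnVec]
  split_ifs <;> simp [Ne.symm hne]

lemma image_phiT_simpA (hT : Set.InjOn Prod.fst (T : Set (Fin n × Bool)))
    {S : Finset (Fin n × Bool)} (hST : S ⊆ T) :
    phiT n T '' simpA (n + 1) (insert 0 (S.image fun p => p.1.succ)) = simp0 n S := by
  rw [simpA, ← coe_phiTLinear, LinearMap.image_convexHull, simp0, Finset.coe_insert,
    Finset.coe_image, Set.image_insert_eq, Set.image_insert_eq, Set.image_image,
    Set.image_image, Set.singleton_union, coe_phiTLinear, phiT_single_zero]
  congr 2
  exact Set.image_congr fun p hp => phiT_single_succ hT (hST hp)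

end phiT

lemma eq_of_succ_eq_of_sum_eq {M : Type*} [AddCommGroup M] {n : ℕ} {x x' : Fin (n + 1) → M}
    (h : ∀ j : Fin n, x j.succ = x' j.succ) (hs : ∑ j, x j = ∑ j, x' j) : x = x' := by
  funext k
  induction k using Fin.cases with
  | zero =>
    rw [Fin.sum_univ_succ, Fin.sum_univ_succ, Finset.sum_congr rfl fun j _ => h j] at hs
    exact add_right_cancel hs
  | succ j => exact h j

lemma mem_latt_of_succ {n : ℕ} {x : Fin (n + 1) → ℝ} (h : ∀ j : Fin n, ∃ z : ℤ, x j.succ = z)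
    (hs : ∃ z : ℤ, ∑ j, x j = z) : x ∈ latt (n + 1) := by
  obtain ⟨z, hz⟩ := hs
  choose w hw using h
  intro k
  induction k using Fin.cases with
  | zero =>
    refine ⟨z - ∑ j, w j, ?_⟩
    rw [Fin.sum_univ_succ, Finset.sum_congr rfl fun j _ => hw j] at hz
    push_cast
    linarith
  | succ j => exact ⟨w j, hw j⟩

namespace AdSn

variable {n : ℕ} {T : Finset (Fin n × Bool)}

lemma exists_mem (hT : AdSn n T) (j : Fin n) : ∃ b, (j, b) ∈ T := by
  have himage : T.image Prod.fst = Finset.univ := by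
    apply Finset.eq_univ_of_card
    rw [Finset.card_image_of_injOn hT.2.injOn_fst, hT.1, Fintype.card_fin]
  obtain ⟨p, hp, rfl⟩ := Finset.mem_image.mp (himage ▸ Finset.mem_univ j)
  exact ⟨p.2, hp⟩

lemma exists_phiT_apply (hT : AdSn n T) (j : Fin n) :
    ∃ b : Bool, ∀ x, phiT n T x j = if b then x j.succ else -x j.succ := by
  obtain ⟨b, hb⟩ := hT.exists_mem j
  exact ⟨b, phiT_apply_of_mem hT.2.injOn_fst hb⟩

lemma injOn_phiT (hT : AdSn n T) (Y : ℝ) : Set.InjOn (phiT n T) {x | ∑ j, x j = Y} := by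
  intro x hx x' hx' h
  refine eq_of_succ_eq_of_sum_eq (fun j => ?_) (hx.trans hx'.symm)
  obtain ⟨b, hb⟩ := hT.exists_phiT_apply j
  have hj := congrFun h j
  rw [hb, hb] at hj
  cases b <;> simpa using hj

lemma phiT_mem_latt (hT : AdSn n T) {x : Fin (n + 1) → ℝ} (hx : x ∈ latt (n + 1)) :
    phiT n T x ∈ latt n := by
  intro j
  obtain ⟨b, hb⟩ := hT.exists_phiT_apply j
  obtain ⟨z, hz⟩ := hx j.succ
  cases b
  · exact ⟨-z, by simp [hb, hz]⟩
  · exact ⟨z, by simp [hb, hz]⟩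

lemma mem_latt_of_phiT_mem_latt (hT : AdSn n T) {x : Fin (n + 1) → ℝ}
    (hx : phiT n T x ∈ latt n) (hs : ∃ z : ℤ, ∑ j, x j = z) : x ∈ latt (n + 1) := by
  refine mem_latt_of_succ (fun j => ?_) hs
  obtain ⟨b, hb⟩ := hT.exists_phiT_apply j
  obtain ⟨z, hz⟩ := hx j
  rw [hb] at hz
  cases b
  · exact ⟨-z, by simpa [neg_eq_iff_eq_neg] using hz⟩
  · exact ⟨z, by simpa using hz⟩

end AdSn

theorem stmt3_general (n m : ℕ) (T : Finset (Fin n × Bool)) (hT : AdSn n T)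
    (y : Fin m → ℕ)
    (S : Fin m → Finset (Fin n × Bool))
    (I : Fin m → Finset (Fin (n + 1)))
    (hI : ∀ i, I i = insert 0 ((S i ∩ T).image fun p => p.1.succ))
    (QT : Set (Fin (n + 1) → ℝ)) (hQT : QT = ∑ i : Fin m, (y i : ℝ) • simpA (n + 1) (I i))
    (PT : Set (Fin n → ℝ)) (hPT : PT = ∑ i : Fin m, (y i : ℝ) • simp0 n (S i ∩ T)) :
    phiT n T '' QT = PT ∧
    Set.InjOn (phiT n T) (affineSpan ℝ QT : Set (Fin (n + 1) → ℝ)) ∧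
    Set.BijOn (phiT n T) (QT ∩ latt (n + 1)) (PT ∩ latt n) := by
  have himage : phiT n T '' QT = PT := by
    rw [hQT, hPT, ← coe_phiTLinear, Set.image_finsetSum]
    refine Finset.sum_congr rfl fun i _ => ?_
    rw [image_smul_set, coe_phiTLinear, hI i,
      image_phiT_simpA hT.2.injOn_fst Finset.inter_subset_right]
  have hlevel : ∀ x ∈ QT, ∑ j, x j = ∑ i, (y i : ℝ) := fun x hx =>
    sum_eq_of_mem_sum_smul_simpA (hQT ▸ hx)
  have hinj := hT.injOn_phiT (∑ i, (y i : ℝ))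
  refine ⟨himage, hinj.mono fun x hx => ?_, fun x hx => ?_, hinj.mono fun x hx => hlevel x hx.1,
    fun q hq => ?_⟩
  · simpa using (coordSum (Fin (n + 1))).toAffineMap.apply_eq_of_mem_affineSpan
      (fun x hx => by simpa using hlevel x hx) hx
  · exact ⟨himage ▸ Set.mem_image_of_mem _ hx.1, hT.phiT_mem_latt hx.2⟩
  · obtain ⟨x, hxQ, rfl⟩ := himage.symm ▸ hq.1
    refine ⟨x, ⟨hxQ, hT.mem_latt_of_phiT_mem_latt hq.2 ⟨∑ i, (y i : ℤ), ?_⟩⟩, rfl⟩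
    push_cast
    exact hlevel x hxQ

/-- For `T ∈ AdS_n` and `P = y_1Δ⁰_{S_1} + ⋯ + y_mΔ⁰_{S_m}` with `y_i` positive
integers and `S_i` admissible, letting `I_i := {0} ∪ {j : ±e_j ∈ S_i ∩ T}` and
`Q_T := y_1Δ_{I_1} + ⋯ + y_mΔ_{I_m} ⊆ ℝ^{0,…,n}`, the projection `φ_T` maps `Q_T` onto
`P_T := y_1Δ⁰_{S_1∩T} + ⋯ + y_mΔ⁰_{S_m∩T}`, is injective on the affine hull of `Q_T`, and
restricts to a bijection between the lattice points of `Q_T` and those of `P_T`; in particular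
`P_T` is integrally equivalent to the type A generalized permutohedron `Q_T`. -/
theorem stmt3 (n m : ℕ) (T : Finset (Fin n × Bool)) (hT : AdSn n T)
    (y : Fin m → ℕ) (hy : ∀ i, 0 < y i)
    (S : Fin m → Finset (Fin n × Bool)) (hS : ∀ i, Adm n (S i))
    (I : Fin m → Finset (Fin (n + 1)))
    (hI : ∀ i, I i = insert 0 ((S i ∩ T).image fun p => p.1.succ))
    (QT : Set (Fin (n + 1) → ℝ)) (hQT : QT = ∑ i : Fin m, (y i : ℝ) • simpA (n + 1) (I i))
    (PT : Set (Fin n → ℝ)) (hPT : PT = ∑ i : Fin m, (y i : ℝ) • simp0 n (S i ∩ T)) :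
    phiT n T '' QT = PT ∧
    Set.InjOn (phiT n T) (affineSpan ℝ QT : Set (Fin (n + 1) → ℝ)) ∧
    Set.BijOn (phiT n T) (QT ∩ latt (n + 1)) (PT ∩ latt n) :=
  stmt3_general n m T hT y S I hI QT hQT PT hPT
end
end

section
/- Let n ≥ 1. Let Q := (n−1)·conv({0, e_1, …, e_n}) = {x ∈ ℝ^n : x_1 + ⋯ + x_n ≤ n−1 and x_i ≥ 0 for all i}, and let ∇_{[n]} := {x ∈ ℝ^n : x_1 + ⋯ + x_n ≥ n−1 and x_i ≤ 1 for all i}. Then for all integer vectors y, z ∈ ℤ^n, the interiors of y + Q and z + ∇_{[n]} are disjoint. -/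
/-!
A point of the interior of `y + Q` satisfies `x > y` coordinatewise and `∑ (x - y) < n - 1`; a
point of the interior of `z + ∇` satisfies `x < z + 1` coordinatewise and `∑ (x - z) ≥ n - 1`.
For integer vectors the coordinate bounds force `y ≤ z`, hence `∑ (x - z) ≤ ∑ (x - y)`, which
contradicts the two bounds on the sums.
-/

open Pointwise Set

section Orthant

variable {ι α : Type*} [Finite ι] [TopologicalSpace α] [LinearOrder α] [OrderTopology α]
  [DenselyOrdered α]

theorem interior_setOf_forall_le_apply [NoMinOrder α] (a : α) :
    interior {x : ι → α | ∀ i, a ≤ x i} = {x | ∀ i, a < x i} := by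
  rw [show {x : ι → α | ∀ i, a ≤ x i} = univ.pi fun _ => Ici a by ext; simp [Pi.le_def],
    interior_pi_set finite_univ]
  ext; simp

theorem interior_setOf_forall_apply_le [NoMaxOrder α] (a : α) :
    interior {x : ι → α | ∀ i, x i ≤ a} = {x | ∀ i, x i < a} := by
  rw [show {x : ι → α | ∀ i, x i ≤ a} = univ.pi fun _ => Iic a by ext; simp [Pi.le_def],
    interior_pi_set finite_univ]
  ext; simp

end Orthant

variable {ι : Type*} [Fintype ι]

theorem interior_setOf_sum_le [Nonempty ι] (c : ℝ) :
    interior {x : ι → ℝ | ∑ j, x j ≤ c} = {x | ∑ j, x j < c} := by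
  classical
  let f : (ι → ℝ) →L[ℝ] ℝ := ∑ j, ContinuousLinearMap.proj j
  have hf : ∀ x, f x = ∑ j, x j := fun x => by simp [f]
  have hsurj : Function.Surjective f := fun r => by
    obtain ⟨i⟩ := ‹Nonempty ι›
    exact ⟨Pi.single i r, by simp [hf]⟩
  simpa [preimage, hf] using f.interior_preimage hsurj (Iic c)

theorem convex_setOf_sum_le_and_nonneg (c : ℝ) :
    Convex ℝ {x : ι → ℝ | ∑ j, x j ≤ c ∧ ∀ i, 0 ≤ x i} := by
  rintro x ⟨hx, hx0⟩ y ⟨hy, hy0⟩ a b ha hb hab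
  refine ⟨?_, fun i => ?_⟩
  · simp only [Pi.add_apply, Pi.smul_apply, smul_eq_mul, Finset.sum_add_distrib, ← Finset.mul_sum]
    calc a * ∑ j, x j + b * ∑ j, y j ≤ a * c + b * c := by gcongr
      _ = c := by rw [← add_mul, hab, one_mul]
  · simp only [Pi.add_apply, Pi.smul_apply, smul_eq_mul]
    have := hx0 i; have := hy0 i
    positivity

theorem convexHull_zero_union_single [DecidableEq ι] :
    convexHull ℝ ({0} ∪ range fun i : ι => (Pi.single i (1 : ℝ) : ι → ℝ)) =
      {x | ∑ j, x j ≤ 1 ∧ ∀ i, 0 ≤ x i} := by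
  refine (convexHull_min ?_ (convex_setOf_sum_le_and_nonneg 1)).antisymm ?_
  · rintro x (rfl | ⟨i, rfl⟩)
    · simp
    · refine ⟨by simp, fun j => ?_⟩
      simp only [Pi.single_apply]
      split_ifs <;> norm_num
  · rintro x ⟨hx, hx0⟩
    -- `x = (1 - ∑ j, x j) • 0 + ∑ i, x i • eᵢ`, indexed by `Option ι`
    have hx_eq : x = ∑ i : Option ι, i.elim (1 - ∑ j, x j) x • i.elim 0 (Pi.single · 1) := by
      simpa [Fintype.sum_option] using pi_eq_sum_univ' x
    rw [hx_eq]
    refine (convex_convexHull ℝ _).sum_mem ?_ (by simp [Fintype.sum_option]) ?_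
    · rintro (_ | i) _
      exacts [sub_nonneg.2 hx, hx0 i]
    · rintro (_ | i) _
      exacts [subset_convexHull ℝ _ (Or.inl rfl), subset_convexHull ℝ _ (Or.inr ⟨i, rfl⟩)]

theorem smul_setOf_sum_le_one_and_nonneg {c : ℝ} (hc : 0 ≤ c) :
    c • {x : ι → ℝ | ∑ j, x j ≤ 1 ∧ ∀ i, 0 ≤ x i} = {x | ∑ j, x j ≤ c ∧ ∀ i, 0 ≤ x i} := by
  rcases hc.eq_or_lt with rfl | hc
  · rw [zero_smul_set ⟨0, by simp⟩]
    ext x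
    refine ⟨fun hx => by simp_all, fun ⟨hx, hx0⟩ => funext fun i => ?_⟩
    exact (Finset.sum_eq_zero_iff_of_nonneg fun j _ => hx0 j).1
      (hx.antisymm (Finset.sum_nonneg fun j _ => hx0 j)) i (Finset.mem_univ i)
  · ext x
    simp [mem_smul_set_iff_inv_smul_mem₀ hc.ne', ← Finset.mul_sum, inv_mul_le_iff₀ hc, hc]

theorem interior_setOf_sum_le_and_nonneg [Nonempty ι] (c : ℝ) :
    interior {x : ι → ℝ | ∑ j, x j ≤ c ∧ ∀ i, 0 ≤ x i} = {x | ∑ j, x j < c ∧ ∀ i, 0 < x i} := by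
  rw [ofPred_and, interior_inter, interior_setOf_sum_le, interior_setOf_forall_le_apply 0]
  rfl

theorem interior_setOf_le_sum_and_le_one_subset (c : ℝ) :
    interior {x : ι → ℝ | c ≤ ∑ j, x j ∧ ∀ i, x i ≤ 1} ⊆ {x | ∀ i, x i < 1} := by
  rw [← interior_setOf_forall_apply_le 1]
  exact interior_mono fun x hx => hx.2

theorem disjoint_interior_vadd_setOf_sum_le_vadd_setOf_le_sum [Nonempty ι] (c : ℝ)
    (y z : ι → ℤ) :
    Disjoint
      (interior ((fun j => (y j : ℝ)) +ᵥ {x : ι → ℝ | ∑ j, x j ≤ c ∧ ∀ i, 0 ≤ x i}))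
      (interior ((fun j => (z j : ℝ)) +ᵥ {x : ι → ℝ | c ≤ ∑ j, x j ∧ ∀ i, x i ≤ 1})) := by
  refine disjoint_left.2 fun x hxQ hxN => ?_
  rw [interior_vadd, mem_vadd_set_iff_neg_vadd_mem, interior_setOf_sum_le_and_nonneg] at hxQ
  rw [interior_vadd, mem_vadd_set_iff_neg_vadd_mem] at hxN
  have hsumN := (interior_subset hxN).1
  replace hxN := interior_setOf_le_sum_and_le_one_subset c hxN
  simp only [vadd_eq_add, neg_add_eq_sub, mem_ofPred_eq, Pi.sub_apply, sub_pos,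
    sub_lt_iff_lt_add'] at hxQ hxN hsumN
  have hyz : ∀ j, (y j : ℝ) ≤ z j := fun j => by
    exact_mod_cast Int.lt_add_one_iff.1 (by exact_mod_cast (hxQ.2 j).trans (hxN j))
  have := Finset.sum_le_sum fun j (_ : j ∈ Finset.univ) => sub_le_sub_left (hyz j) (x j)
  linarith [hxQ.1]

/-- For `n ≥ 1`, let
`Q := (n−1)·conv({0, e_1, …, e_n}) = {x : x_1 + ⋯ + x_n ≤ n−1, x_i ≥ 0}` and
`∇_[n] := {x : x_1 + ⋯ + x_n ≥ n−1, x_i ≤ 1}`. Then for all integer vectors `y, z`,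
the interiors of `y + Q` and `z + ∇_[n]` are disjoint. -/
theorem stmt6 (n : ℕ) (hn : 1 ≤ n) (y z : Fin n → ℤ) :
    (((n : ℝ) - 1) • convexHull ℝ
        ({0} ∪ Set.range fun i : Fin n => (Pi.single i (1 : ℝ) : Fin n → ℝ)) =
      {x : Fin n → ℝ | (∑ j, x j) ≤ (n : ℝ) - 1 ∧ ∀ i, 0 ≤ x i}) ∧
    Disjoint
      (interior ((fun j => (y j : ℝ)) +ᵥ
        {x : Fin n → ℝ | (∑ j, x j) ≤ (n : ℝ) - 1 ∧ ∀ i, 0 ≤ x i}))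
      (interior ((fun j => (z j : ℝ)) +ᵥ
        {x : Fin n → ℝ | (n : ℝ) - 1 ≤ (∑ j, x j) ∧ ∀ i, x i ≤ 1})) := by
  have : Nonempty (Fin n) := ⟨⟨0, hn⟩⟩
  have hc : (0 : ℝ) ≤ n - 1 := sub_nonneg.2 (by exact_mod_cast hn)
  exact ⟨by rw [convexHull_zero_union_single, smul_setOf_sum_le_one_and_nonneg hc],
    disjoint_interior_vadd_setOf_sum_le_vadd_setOf_le_sum _ y z⟩
end

section
/- Let S_1,…,S_m be admissible sets of signed vectors in ℝ^n, let T ∈ AdS_n, and suppose P_T := Δ⁰_{S_1∩T} + ⋯ + Δ⁰_{S_m∩T} is n-dimensional. Let Π := conv(E_1) + ⋯ + conv(E_m) be a fine mixed cell of P_T, i.e., each E_i is a nonempty subset of {0} ∪ (S_i ∩ T), Σ_{i=1}^m (|E_i| − 1) = n, and Π is n-dimensional. Let Π̂ := Σ_{i : |E_i| ≥ 2} conv(E_i), and let x ∈ ℤ^n be the lattice point x := Σ_{i : |E_i| = 1} w_i, where w_i is the unique element of E_i, so that Π = x + Π̂. Then the following are equivalent: (1) ∇_T ⊆ Π̂;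 (2) x lies in (P_T − □_T) ∩ ℤ^n and x is the unique point u of (P_T − □_T) ∩ ℤ^n satisfying u + ∇_T ⊆ Π; (3) |E_i| ≤ 2 for all i ∈ [m], i.e., Π is a zonotope. -/
open Pointwise

noncomputable section

/-- Vertices of the summands of fine mixed cells: `none ↦ 0`, `some p ↦ ±e_i`. -/
def vec0 (n : ℕ) : Option (Fin n × Bool) → (Fin n → ℝ)
  | none => 0
  | some p => sgnVec n p

/-- `σ_T := Σ_{v ∈ T} v`. -/
def sigmaT (n : ℕ) (T : Finset (Fin n × Bool)) : Fin n → ℝ := ∑ p ∈ T, sgnVec n p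

/-- `∇_T := conv({σ_T} ∪ {σ_T − v : v ∈ T})`. -/
def nablaT (n : ℕ) (T : Finset (Fin n × Bool)) : Set (Fin n → ℝ) :=
  convexHull ℝ ({sigmaT n T} ∪ (fun p => sigmaT n T - sgnVec n p) '' ↑T)

/-- `□_T := Σ_{v ∈ T} conv{0, v}`, the unit cube of the octant of `T`. -/
def cubeT (n : ℕ) (T : Finset (Fin n × Bool)) : Set (Fin n → ℝ) :=
  ∑ p ∈ T, convexHull ℝ {0, sgnVec n p}

/-!
For `E_i ⊆ {0} ∪ T` the functional `y ↦ σ_T ⬝ᵥ y` is at most `1` on every `conv(E_i)` and equals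
`n` at `σ_T`. Since `∑ (|E_i| - 1) = n`, the point `σ_T` can only lie in `Π̂` when at least `n`
of the `E_i` are non-singletons, that is, when every `|E_i| ≤ 2`; this gives (1) ⇒ (3) and
(2) ⇒ (3), because `σ_T ∈ ∇_T`.

Conversely, if every `|E_i| ≤ 2`, then `Π̂` is a sum of `n` segments joining vertices of `Δ⁰_T`,
and since `Π` is full-dimensional their directions form a basis. So the segments form a spanning
tree on the `n + 1` vertices `{0} ∪ T`: any `k` of them have independent directions, hence touch
at least `k + 1` vertices, and Hall's theorem lets every segment pick the endpoint away from any
given root `ρ`, bijectively onto the other vertices. Thus each vertex `σ_T - ρ` of `∇_T`, and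
likewise each vertex of `□_T`, is a sum of segment endpoints, giving `∇_T ⊆ Π̂` and
`x + □_T ⊆ P_T`. For uniqueness, expand `u - x` in the basis of directions: the coefficient of a
segment is `≤ 0` when read off with the root at one of its endpoints and `≥ 0` with the root at
the other, so it vanishes.
-/

section Forest

variable {𝕜 W V ι : Type*} [DecidableEq V] {w : V → W} {a b : ι → V}

section DivisionRing

variable [DivisionRing 𝕜] [AddCommGroup W] [Module 𝕜 W]

theorem card_add_one_le_card_biUnion_of_linearIndependent
    (hind : LinearIndependent 𝕜 fun i => w (b i) - w (a i)) {s : Finset ι} (hs : s.Nonempty) :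
    s.card + 1 ≤ (s.biUnion fun i => {a i, b i}).card := by
  classical
  set Vs := s.biUnion fun i => ({a i, b i} : Finset V)
  obtain ⟨k, hk⟩ : ∃ k, Vs.card = k + 1 :=
    Nat.exists_eq_add_one.2 (Finset.card_pos.2 (hs.biUnion fun i _ => Finset.insert_nonempty _ _))
  have hmem : ∀ i ∈ s, ∀ v ∈ ({a i, b i} : Finset V), w v ∈ (Vs.image w : Set W) :=
    fun i hi v hv => Finset.mem_coe.2 (Finset.mem_image_of_mem w (Finset.mem_biUnion.2 ⟨i, hi, hv⟩))
  have hle : Submodule.span 𝕜 (Set.range fun i : s => w (b i) - w (a i)) ≤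
      vectorSpan 𝕜 (Vs.image w : Set W) := by
    rw [Submodule.span_le]
    rintro _ ⟨i, rfl⟩
    exact vsub_mem_vectorSpan 𝕜 (hmem i i.2 _ (by simp)) (hmem i i.2 _ (by simp))
  have hind' : LinearIndependent 𝕜 fun i : s => w (b i) - w (a i) :=
    hind.comp _ Subtype.val_injective
  have := finiteDimensional_vectorSpan_of_finite 𝕜 (Vs.image w).finite_toSet
  have := (Submodule.finrank_mono hle).trans (finrank_vectorSpan_image_finset_le 𝕜 w Vs hk)
  rw [← Set.finrank, ← linearIndependent_iff_card_eq_finrank_span.1 hind', Fintype.card_coe] at this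
  omega

theorem exists_equiv_erase_of_linearIndependent [Fintype ι]
    (hind : LinearIndependent 𝕜 fun i => w (b i) - w (a i)) {U : Finset V}
    (hU : ∀ i, a i ∈ U ∧ b i ∈ U) (hcard : U.card = Fintype.card ι + 1) {ρ : V} (hρ : ρ ∈ U) :
    ∃ g : ι ≃ U.erase ρ, ∀ i, (g i : V) = a i ∨ (g i : V) = b i := by
  have hall (s : Finset ι) :
      s.card ≤ (s.biUnion fun i => ({a i, b i} : Finset V).erase ρ).card := by
    rcases s.eq_empty_or_nonempty with rfl | hs
    · simp
    set Vs := s.biUnion fun i => ({a i, b i} : Finset V)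
    have herase : Vs.erase ρ ⊆ s.biUnion fun i => ({a i, b i} : Finset V).erase ρ := by
      intro v
      simp only [Vs, Finset.mem_erase, Finset.mem_biUnion]
      exact fun ⟨hv, i, hi, hvi⟩ => ⟨i, hi, hv, hvi⟩
    have h₁ : s.card + 1 ≤ Vs.card := card_add_one_le_card_biUnion_of_linearIndependent hind hs
    have h₂ := Finset.pred_card_le_card_erase (s := Vs) (a := ρ)
    have h₃ := Finset.card_le_card herase
    omega
  obtain ⟨f, hf, hft⟩ := (Finset.all_card_le_biUnion_card_iff_exists_injective _).1 hall
  have hfU (i : ι) : f i ∈ U.erase ρ ∧ (f i = a i ∨ f i = b i) := by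
    have := hft i
    simp only [Finset.mem_erase, Finset.mem_insert, Finset.mem_singleton] at this
    refine ⟨Finset.mem_erase.2 ⟨this.1, ?_⟩, this.2⟩
    rcases this.2 with h | h <;> rw [h]
    exacts [(hU i).1, (hU i).2]
  let f' : ι → U.erase ρ := fun i => ⟨f i, (hfU i).1⟩
  have hbij : Function.Bijective f' := (Fintype.bijective_iff_injective_and_card f').2
    ⟨fun i j h => hf (congrArg Subtype.val h), by simp [Finset.card_erase_of_mem hρ, hcard]⟩
  exact ⟨Equiv.ofBijective f' hbij, fun i => (hfU i).2⟩

end DivisionRing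

section LinearOrderedField

variable [Field 𝕜] [LinearOrder 𝕜] [IsStrictOrderedRing 𝕜] [AddCommGroup W] [Module 𝕜 W]
  [Fintype ι]

theorem exists_eq_sum_add_sum_smul_of_mem_sum_segment {p q : ι → W} {y : W}
    (hy : y ∈ ∑ i, segment 𝕜 (p i) (q i)) :
    ∃ t : ι → 𝕜, (∀ i, t i ∈ Set.Icc 0 1) ∧ y = ∑ i, p i + ∑ i, t i • (q i - p i) := by
  obtain ⟨z, hz, rfl⟩ := (Set.mem_fintype_sum _ _).1 hy
  simp_rw [segment_eq_image'] at hz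
  choose t ht hzt using hz
  refine ⟨t, ht, ?_⟩
  rw [← Finset.sum_add_distrib]
  exact Finset.sum_congr rfl fun i _ => (hzt i).symm

theorem span_sub_eq_top_of_affineSpan_vadd_sum_segment {p q : ι → W} (v : W)
    (h : affineSpan 𝕜 (v +ᵥ ∑ i, segment 𝕜 (p i) (q i)) = ⊤) :
    Submodule.span 𝕜 (Set.range fun i => q i - p i) = ⊤ := by
  set D := Submodule.span 𝕜 (Set.range fun i => q i - p i)
  have hsub : v +ᵥ ∑ i, segment 𝕜 (p i) (q i) ⊆ AffineSubspace.mk' (v + ∑ i, p i) D := by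
    rintro _ ⟨y, hy, rfl⟩
    obtain ⟨t, -, rfl⟩ := exists_eq_sum_add_sum_smul_of_mem_sum_segment hy
    simp only [SetLike.mem_coe, AffineSubspace.mem_mk', vsub_eq_sub, vadd_eq_add,
      add_sub_add_left_eq_sub, add_sub_cancel_left]
    exact D.sum_mem fun i _ => D.smul_mem (t i) (Submodule.subset_span ⟨i, rfl⟩)
  have := AffineSubspace.direction_le (affineSpan_le.2 hsub)
  rwa [h, AffineSubspace.direction_top, AffineSubspace.direction_mk', top_le_iff] at this

theorem eq_zero_of_forall_add_sum_erase_mem_sum_segment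
    (hind : LinearIndependent 𝕜 fun i => w (b i) - w (a i)) {U : Finset V}
    (hU : ∀ i, a i ∈ U ∧ b i ∈ U) (hcard : U.card = Fintype.card ι + 1) {z : W}
    (hz : ∀ ρ ∈ U, z + ∑ o ∈ U.erase ρ, w o ∈ ∑ i, segment 𝕜 (w (a i)) (w (b i))) : z = 0 := by
  set d := fun i => w (b i) - w (a i)
  have hcoef (ρ : V) (hρ : ρ ∈ U) : ∃ c : ι → 𝕜, z = ∑ i, c i • d i ∧
      (∀ i, a i = ρ → c i ≤ 0) ∧ (∀ i, b i = ρ → 0 ≤ c i) := by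
    obtain ⟨g, hg⟩ := exists_equiv_erase_of_linearIndependent hind hU hcard hρ
    obtain ⟨t, ht, hzt⟩ := exists_eq_sum_add_sum_smul_of_mem_sum_segment (hz ρ hρ)
    let s : ι → 𝕜 := fun i => if (g i : V) = b i then 1 else 0
    have hgs (i : ι) : w (g i) = w (a i) + s i • d i := by
      by_cases hb : (g i : V) = b i
      · simp only [s, d, if_pos hb, one_smul, hb, add_sub_cancel]
      · simp only [s, if_neg hb, zero_smul, add_zero, (hg i).resolve_right hb]
    have hsum : ∑ o ∈ U.erase ρ, w o = ∑ i, w (a i) + ∑ i, s i • d i := by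
      rw [← Finset.sum_coe_sort, ← g.sum_comp, ← Finset.sum_add_distrib]
      exact Finset.sum_congr rfl fun i _ => hgs i
    have hne (i : ι) : (g i : V) ≠ ρ := Finset.ne_of_mem_erase (g i).2
    refine ⟨t - s, ?_, fun i hi => ?_, fun i hi => ?_⟩
    · simp only [Pi.sub_apply, sub_smul, Finset.sum_sub_distrib]
      rw [hsum] at hzt
      linear_combination (norm := module) hzt
    · have : (g i : V) = b i := (hg i).resolve_left (hi ▸ hne i)
      simp [s, this, (ht i).2]
    · have : (g i : V) ≠ b i := hi ▸ hne i
      simp [s, this, (ht i).1]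
  choose! c hc hca hcb using hcoef
  obtain ⟨ρ₀, hρ₀⟩ : U.Nonempty := Finset.card_pos.1 (by omega)
  have hcoef_eq (ρ : V) (hρ : ρ ∈ U) (i : ι) : c ρ i = c ρ₀ i :=
    Fintype.linearIndependent_iffₛ.1 hind _ _ ((hc ρ hρ).symm.trans (hc ρ₀ hρ₀)) i
  have hzero (i : ι) : c ρ₀ i = 0 := by
    have h₁ := hca (a i) (hU i).1 i rfl
    have h₂ := hcb (b i) (hU i).2 i rfl
    rw [hcoef_eq _ (hU i).1] at h₁
    rw [hcoef_eq _ (hU i).2] at h₂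
    exact le_antisymm h₁ h₂
  simp [hc ρ₀ hρ₀, hzero]

theorem sum_erase_mem_sum_segment_of_linearIndependent
    (hind : LinearIndependent 𝕜 fun i => w (b i) - w (a i)) {U : Finset V}
    (hU : ∀ i, a i ∈ U ∧ b i ∈ U) (hcard : U.card = Fintype.card ι + 1) {ρ : V} (hρ : ρ ∈ U) :
    ∑ o ∈ U.erase ρ, w o ∈ ∑ i, segment 𝕜 (w (a i)) (w (b i)) := by
  obtain ⟨g, hg⟩ := exists_equiv_erase_of_linearIndependent hind hU hcard hρ
  rw [← Finset.sum_coe_sort (U.erase ρ), ← g.sum_comp fun o => w o]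
  refine Set.finsetSum_mem_finsetSum _ _ _ fun i _ => ?_
  rcases hg i with h | h <;> rw [h]
  exacts [left_mem_segment 𝕜 _ _, right_mem_segment 𝕜 _ _]

end LinearOrderedField

end Forest

theorem exists_sum_convexHull_eq_sum_segment {𝕜 ι V W : Type*} [Field 𝕜] [LinearOrder 𝕜]
    [IsStrictOrderedRing 𝕜] [AddCommGroup W] [Module 𝕜 W] {s : Finset ι} {E : ι → Finset V}
    (w : V → W) (hE : ∀ i ∈ s, (E i).card = 2) :
    ∃ a b : s → V, (∀ i : s, a i ∈ E i ∧ b i ∈ E i) ∧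
      ∑ i ∈ s, convexHull 𝕜 (w '' E i) = ∑ i : s, segment 𝕜 (w (a i)) (w (b i)) := by
  classical
  choose a b _ hab using fun i : s => Finset.card_eq_two.1 (hE i i.2)
  refine ⟨a, b, fun i => by simp [hab i], ?_⟩
  rw [← Finset.sum_coe_sort]
  refine Finset.sum_congr rfl fun i _ => ?_
  rw [hab i, Finset.coe_pair, Set.image_pair, convexHull_pair]

theorem Finset.card_filter_two_le_le_sum_tsub_one {α : Type*} (s : Finset α) (f : α → ℕ) :
    (s.filter fun i => 2 ≤ f i).card ≤ ∑ i ∈ s, (f i - 1) := by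
  rw [Finset.card_filter]
  exact Finset.sum_le_sum fun i _ => by split <;> omega

theorem Finset.sum_tsub_one_eq_card_filter_two_le_iff {α : Type*} {s : Finset α} {f : α → ℕ} :
    ∑ i ∈ s, (f i - 1) = (s.filter fun i => 2 ≤ f i).card ↔ ∀ i ∈ s, f i ≤ 2 := by
  rw [Finset.card_filter, eq_comm, Finset.sum_eq_sum_iff_of_le fun i _ => by split <;> omega]
  exact forall₂_congr fun i _ => by split <;> omega

section Octant

variable {n : ℕ}

theorem sgnVec_apply_of_ne {p : Fin n × Bool} {j : Fin n} (h : j ≠ p.1) : sgnVec n p j = 0 := by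
  unfold sgnVec; split <;> simp [h]

theorem Adm.eq_of_fst_eq {T : Finset (Fin n × Bool)} (hT : Adm n T) {p q : Fin n × Bool}
    (hp : p ∈ T) (hq : q ∈ T) (h : p.1 = q.1) : p = q := by
  obtain ⟨i, x⟩ := p
  obtain ⟨j, y⟩ := q
  obtain rfl : i = j := h
  have := hT.2 i
  cases x <;> cases y <;> simp_all

theorem sigmaT_apply_of_mem {T : Finset (Fin n × Bool)} (hT : Adm n T) {q : Fin n × Bool}
    (hq : q ∈ T) : sigmaT n T q.1 = sgnVec n q q.1 := by
  rw [sigmaT, Finset.sum_apply, Finset.sum_eq_single_of_mem q hq]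
  exact fun p hp hpq => sgnVec_apply_of_ne fun h => hpq (hT.eq_of_fst_eq hp hq h.symm)

theorem sigmaT_dotProduct_sgnVec {T : Finset (Fin n × Bool)} (hT : Adm n T) {q : Fin n × Bool}
    (hq : q ∈ T) : sigmaT n T ⬝ᵥ sgnVec n q = 1 := by
  have h := sigmaT_apply_of_mem hT hq
  unfold sgnVec at h ⊢
  split <;> simp_all

/-- The vertex set `{0} ∪ T` of `Δ⁰_T`, encoded as for `vec0`. -/
def octantVertices (T : Finset (Fin n × Bool)) : Finset (Option (Fin n × Bool)) :=
  insert none (T.image some)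

theorem insert_none_image_subset_octantVertices (S T : Finset (Fin n × Bool)) :
    insert none ((S ∩ T).image some) ⊆ octantVertices T :=
  Finset.insert_subset_insert _ (Finset.image_subset_image Finset.inter_subset_right)

theorem card_octantVertices (T : Finset (Fin n × Bool)) :
    (octantVertices T).card = T.card + 1 := by
  rw [octantVertices, Finset.card_insert_of_notMem (by simp),
    Finset.card_image_of_injective _ (Option.some_injective _)]

theorem sum_erase_octantVertices {T : Finset (Fin n × Bool)} {ρ : Option (Fin n × Bool)}
    (hρ : ρ ∈ octantVertices T) :
    ∑ o ∈ (octantVertices T).erase ρ, vec0 n o = sigmaT n T - vec0 n ρ := by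
  rw [Finset.sum_erase_eq_sub hρ, octantVertices, Finset.sum_insert (by simp),
    Finset.sum_image fun _ _ _ _ h => Option.some_injective _ h]
  simp [vec0, sigmaT]

theorem nablaT_eq_convexHull (T : Finset (Fin n × Bool)) :
    nablaT n T = convexHull ℝ
      ((fun ρ => ∑ o ∈ (octantVertices T).erase ρ, vec0 n o) '' octantVertices T) := by
  rw [Set.image_congr fun ρ hρ => sum_erase_octantVertices hρ]
  simp [nablaT, octantVertices, vec0, Set.image_insert_eq, Set.image_image]

theorem vec0_mem_simp0 {S : Finset (Fin n × Bool)} {o : Option (Fin n × Bool)}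
    (ho : o ∈ insert none (S.image some)) : vec0 n o ∈ simp0 n S := by
  apply subset_convexHull
  rcases Finset.mem_insert.1 ho with rfl | ho
  · exact Or.inl rfl
  · obtain ⟨p, hp, rfl⟩ := Finset.mem_image.1 ho
    exact Or.inr ⟨p, hp, rfl⟩

theorem convexHull_vec0_subset_simp0 {S : Finset (Fin n × Bool)}
    {E : Finset (Option (Fin n × Bool))} (hE : E ⊆ insert none (S.image some)) :
    convexHull ℝ (vec0 n '' E) ⊆ simp0 n S :=
  convexHull_min (by rintro _ ⟨o, ho, rfl⟩; exact vec0_mem_simp0 (hE ho)) (convex_convexHull ℝ _)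

theorem card_le_of_sigmaT_mem_sum {ι : Type*} {T : Finset (Fin n × Bool)} (hT : AdSn n T)
    {s : Finset ι} {E : ι → Finset (Option (Fin n × Bool))}
    (hE : ∀ i ∈ s, E i ⊆ octantVertices T)
    (h : sigmaT n T ∈ ∑ i ∈ s, convexHull ℝ (vec0 n '' E i)) : n ≤ s.card := by
  set ℓ := dotProductBilin ℝ ℝ (sigmaT n T)
  have hℓ (o : Option (Fin n × Bool)) (ho : o ∈ octantVertices T) : ℓ (vec0 n o) ≤ 1 := by
    rcases Finset.mem_insert.1 ho with rfl | ho
    · simp [vec0]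
    · obtain ⟨p, hp, rfl⟩ := Finset.mem_image.1 ho
      simp [ℓ, vec0, sigmaT_dotProduct_sgnVec hT.2 hp]
  have hbound (i : ι) (hi : i ∈ s) : ∀ y ∈ convexHull ℝ (vec0 n '' E i), ℓ y ≤ 1 :=
    convexHull_min (by rintro _ ⟨o, ho, rfl⟩; exact hℓ o (hE i hi ho))
      (convex_halfSpace_le ℓ.isLinear 1)
  have hℓσ : ℓ (sigmaT n T) = n := by
    conv_lhs => enter [2]; rw [sigmaT]
    simp only [ℓ, dotProductBilin_apply_apply, dotProduct_sum]
    rw [Finset.sum_congr rfl fun p hp => sigmaT_dotProduct_sgnVec hT.2 hp]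
    simp [hT.1]
  obtain ⟨y, hy, hσ⟩ := (Set.mem_finsetSum _ _ _).1 h
  have : (n : ℝ) ≤ s.card := by
    rw [← hℓσ, ← hσ, map_sum]
    simpa using Finset.sum_le_sum fun i hi => hbound i hi (y i) (hy hi)
  exact_mod_cast this

theorem card_le_two_of_sigmaT_mem_sum {ι : Type*} [Fintype ι] {T : Finset (Fin n × Bool)}
    (hT : AdSn n T) {E : ι → Finset (Option (Fin n × Bool))} (hE : ∀ i, E i ⊆ octantVertices T)
    (hE3 : ∑ i, ((E i).card - 1) = n)
    (h : sigmaT n T ∈ ∑ i ∈ Finset.univ.filter (fun i => 2 ≤ (E i).card),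
      convexHull ℝ (vec0 n '' E i)) (i : ι) :
    (E i).card ≤ 2 := by
  have h₁ := card_le_of_sigmaT_mem_sum hT (fun i _ => hE i) h
  have h₂ := hE3 ▸ Finset.card_filter_two_le_le_sum_tsub_one Finset.univ fun i => (E i).card
  exact Finset.sum_tsub_one_eq_card_filter_two_le_iff.1
    (show ∑ i, ((E i).card - 1) = (Finset.univ.filter fun i => 2 ≤ (E i).card).card by omega) i
    (Finset.mem_univ i)

theorem add_mem_latt {u v : Fin n → ℝ} (hu : u ∈ latt n) (hv : v ∈ latt n) : u + v ∈ latt n := by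
  intro j
  obtain ⟨p, hp⟩ := hu j
  obtain ⟨q, hq⟩ := hv j
  exact ⟨p + q, by simp [hp, hq]⟩

theorem vec0_mem_latt (o : Option (Fin n × Bool)) : vec0 n o ∈ latt n := by
  intro j
  rcases o with _ | ⟨k, _ | _⟩
  · exact ⟨0, by simp [vec0]⟩
  · exact ⟨if j = k then -1 else 0, by by_cases h : j = k <;> simp [vec0, sgnVec, h]⟩
  · exact ⟨if j = k then 1 else 0, by by_cases h : j = k <;> simp [vec0, sgnVec, h]⟩

theorem mem_latt_of_mem_sum_convexHull {ι : Type*} {s : Finset ι}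
    {E : ι → Finset (Option (Fin n × Bool))} (hE : ∀ i ∈ s, (E i).card = 1) {x : Fin n → ℝ}
    (hx : x ∈ ∑ i ∈ s, convexHull ℝ (vec0 n '' E i)) : x ∈ latt n := by
  obtain ⟨y, hy, rfl⟩ := (Set.mem_finsetSum _ _ _).1 hx
  refine Finset.sum_induction y (· ∈ latt n) (fun _ _ => add_mem_latt)
    (fun j => ⟨0, by simp⟩) fun i hi => ?_
  obtain ⟨o, ho⟩ := Finset.card_eq_one.1 (hE i hi)
  have := hy hi
  rw [ho, Finset.coe_singleton, Set.image_singleton, convexHull_singleton] at this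
  exact this ▸ vec0_mem_latt o

variable {ι : Type*} [Fintype ι] {T : Finset (Fin n × Bool)} {a b : ι → Option (Fin n × Bool)}

theorem cubeT_subset_sum_simp0 {S : ι → Finset (Fin n × Bool)}
    (hab : ∀ i, a i ∈ insert none ((S i ∩ T).image some) ∧ b i ∈ insert none ((S i ∩ T).image some))
    (hind : LinearIndependent ℝ fun i => vec0 n (b i) - vec0 n (a i))
    (hcard : Fintype.card ι = T.card) :
    cubeT n T ⊆ ∑ i, simp0 n (S i ∩ T) := by
  have hU (i : ι) : a i ∈ octantVertices T ∧ b i ∈ octantVertices T :=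
    ⟨insert_none_image_subset_octantVertices _ _ (hab i).1,
      insert_none_image_subset_octantVertices _ _ (hab i).2⟩
  obtain ⟨g, hg⟩ := exists_equiv_erase_of_linearIndependent hind hU
    (by rw [card_octantVertices, hcard]) (Finset.mem_insert_self none _)
  rw [cubeT, ← convexHull_sum]
  refine convexHull_min ?_ (convex_sum _ fun i _ => convex_convexHull ℝ _)
  intro y hy
  obtain ⟨c, hc, rfl⟩ := (Set.mem_finsetSum _ _ _).1 hy
  let f : Option (Fin n × Bool) → (Fin n → ℝ) := fun o => o.elim 0 c
  have hf : ∑ p ∈ T, c p = ∑ i, f (g i) := by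
    rw [g.sum_comp (fun o => f o), Finset.sum_coe_sort, octantVertices,
      Finset.erase_insert (by simp), Finset.sum_image fun _ _ _ _ h => Option.some_injective _ h]
    rfl
  rw [hf]
  refine Set.finsetSum_mem_finsetSum _ _ _ fun i _ => ?_
  have hgi : (g i : Option (Fin n × Bool)) ∈ insert none ((S i ∩ T).image some) :=
    (hg i).elim (fun h => h ▸ (hab i).1) (fun h => h ▸ (hab i).2)
  have h0 : (0 : Fin n → ℝ) ∈ simp0 n (S i ∩ T) := vec0_mem_simp0 (Finset.mem_insert_self none _)
  rcases Finset.mem_insert.1 hgi with h | h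
  · rw [h]; exact h0
  · obtain ⟨p, hp, hpg⟩ := Finset.mem_image.1 h
    simp only [f, ← hpg, Option.elim]
    rcases hc (Finset.inter_subset_right hp) with h | h <;> rw [h]
    · exact h0
    · exact vec0_mem_simp0 (o := some p)
        (Finset.mem_insert_of_mem (Finset.mem_image_of_mem some hp))

theorem nablaT_subset_sum_segment (hU : ∀ i, a i ∈ octantVertices T ∧ b i ∈ octantVertices T)
    (hind : LinearIndependent ℝ fun i => vec0 n (b i) - vec0 n (a i))
    (hcard : Fintype.card ι = T.card) :
    nablaT n T ⊆ ∑ i, segment ℝ (vec0 n (a i)) (vec0 n (b i)) := by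
  rw [nablaT_eq_convexHull]
  refine convexHull_min ?_ (convex_sum _ fun i _ => convex_segment _ _)
  rintro _ ⟨ρ, hρ, rfl⟩
  exact sum_erase_mem_sum_segment_of_linearIndependent hind hU
    (by rw [card_octantVertices, hcard]) hρ

theorem eq_of_vadd_nablaT_subset_vadd_sum_segment
    (hU : ∀ i, a i ∈ octantVertices T ∧ b i ∈ octantVertices T)
    (hind : LinearIndependent ℝ fun i => vec0 n (b i) - vec0 n (a i))
    (hcard : Fintype.card ι = T.card) {u x : Fin n → ℝ}
    (h : u +ᵥ nablaT n T ⊆ x +ᵥ ∑ i, segment ℝ (vec0 n (a i)) (vec0 n (b i))) : u = x := by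
  refine sub_eq_zero.1 (eq_zero_of_forall_add_sum_erase_mem_sum_segment hind hU
    (by rw [card_octantVertices, hcard]) fun ρ hρ => ?_)
  have hmem : ∑ o ∈ (octantVertices T).erase ρ, vec0 n o ∈ nablaT n T := by
    rw [nablaT_eq_convexHull]
    exact subset_convexHull ℝ _ ⟨ρ, hρ, rfl⟩
  obtain ⟨z, hz, hzx⟩ := h (Set.vadd_mem_vadd_set hmem)
  simp only [vadd_eq_add] at hzx
  rwa [sub_add_eq_add_sub, ← hzx, add_sub_cancel_left]

end Octant

theorem mem_mdiff_cubeT {n : ℕ} {ι : Type*} [Fintype ι] {S : ι → Finset (Fin n × Bool)}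
    {T : Finset (Fin n × Bool)} {E : ι → Finset (Option (Fin n × Bool))}
    (hE1 : ∀ i, (E i).Nonempty) (hE2 : ∀ i, E i ⊆ insert none ((S i ∩ T).image some))
    {x : Fin n → ℝ}
    (hx : x ∈ ∑ i ∈ Finset.univ.filter (fun i => (E i).card = 1), convexHull ℝ (vec0 n '' E i))
    {a b : Finset.univ.filter (fun i => 2 ≤ (E i).card) → Option (Fin n × Bool)}
    (hab : ∀ i, a i ∈ E i.1 ∧ b i ∈ E i.1)
    (hind : LinearIndependent ℝ fun i => vec0 n (b i) - vec0 n (a i))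
    (hcard : Fintype.card (Finset.univ.filter fun i => 2 ≤ (E i).card) = T.card) :
    x ∈ mdiff (∑ i, simp0 n (S i ∩ T)) (cubeT n T) := by
  intro c hc
  have hsplit : Finset.univ.filter (fun i => ¬(E i).card = 1) =
      Finset.univ.filter fun i => 2 ≤ (E i).card := by
    ext i
    have := (hE1 i).card_pos
    simp only [Finset.mem_filter, Finset.mem_univ, true_and]
    omega
  rw [← Finset.sum_filter_add_sum_filter_not _ fun i => (E i).card = 1, hsplit,
    ← Finset.sum_coe_sort (Finset.univ.filter fun i => 2 ≤ (E i).card)]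
  exact Set.add_mem_add (Set.finsetSum_subset_finsetSum _ _ _
      (fun i _ => convexHull_vec0_subset_simp0 (hE2 i)) hx)
    (cubeT_subset_sum_simp0 (a := a) (b := b)
      (fun i => ⟨hE2 i (hab i).1, hE2 i (hab i).2⟩) hind hcard hc)

theorem stmt7_general (n m : ℕ) (S : Fin m → Finset (Fin n × Bool))
    (T : Finset (Fin n × Bool)) (hT : AdSn n T)
    (PT : Set (Fin n → ℝ)) (hPT : PT = ∑ i : Fin m, simp0 n (S i ∩ T))
    (E : Fin m → Finset (Option (Fin n × Bool)))
    (hE1 : ∀ i, (E i).Nonempty)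
    (hE2 : ∀ i, E i ⊆ insert none ((S i ∩ T).image some))
    (hE3 : (∑ i, ((E i).card - 1)) = n)
    (Pcell : Set (Fin n → ℝ))
    (hdim : affineSpan ℝ Pcell = ⊤)
    (Phat : Set (Fin n → ℝ))
    (hPhat : Phat = ∑ i ∈ Finset.univ.filter (fun i => 2 ≤ (E i).card),
      convexHull ℝ (vec0 n '' ↑(E i)))
    (x : Fin n → ℝ)
    (hx : ({x} : Set (Fin n → ℝ)) = ∑ i ∈ Finset.univ.filter (fun i => (E i).card = 1),
      convexHull ℝ (vec0 n '' ↑(E i)))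
    (hxPi : Pcell = x +ᵥ Phat) :
    ((nablaT n T ⊆ Phat) ↔ (∀ i, (E i).card ≤ 2)) ∧
    ((x ∈ mdiff PT (cubeT n T) ∩ latt n ∧ x +ᵥ nablaT n T ⊆ Pcell ∧
        ∀ u ∈ mdiff PT (cubeT n T) ∩ latt n, u +ᵥ nablaT n T ⊆ Pcell → u = x) ↔
      (∀ i, (E i).card ≤ 2)) := by
  set I₂ := Finset.univ.filter fun i => 2 ≤ (E i).card
  have hE (i : Fin m) : E i ⊆ octantVertices T :=
    (hE2 i).trans (insert_none_image_subset_octantVertices _ _)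
  have hσ : sigmaT n T ∈ nablaT n T := subset_convexHull ℝ _ (Or.inl rfl)
  have hzonotope (h : sigmaT n T ∈ Phat) := card_le_two_of_sigmaT_mem_sum hT hE hE3 (hPhat ▸ h)
  suffices h3 : (∀ i, (E i).card ≤ 2) → nablaT n T ⊆ Phat ∧ x ∈ mdiff PT (cubeT n T) ∩ latt n ∧
      ∀ u, u +ᵥ nablaT n T ⊆ Pcell → u = x by
    refine ⟨⟨fun h => hzonotope (h hσ), fun h => (h3 h).1⟩,
      ⟨fun ⟨_, h, _⟩ => hzonotope ?_, fun h => ⟨(h3 h).2.1, ?_, fun u _ hu => (h3 h).2.2 u hu⟩⟩⟩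
    · obtain ⟨y, hy, hxy⟩ := hxPi ▸ h (Set.vadd_mem_vadd_set hσ)
      rwa [← add_left_cancel hxy]
    · rw [hxPi]
      exact Set.vadd_set_mono (h3 h).1
  intro h3
  obtain ⟨a, b, hab, hsum⟩ := exists_sum_convexHull_eq_sum_segment (𝕜 := ℝ) (s := I₂) (vec0 n)
    fun i hi => le_antisymm (h3 i) (Finset.mem_filter.1 hi).2
  rw [← hPhat] at hsum
  have hcard : Fintype.card I₂ = T.card := by
    rw [Fintype.card_coe, hT.1, ← hE3]
    exact (Finset.sum_tsub_one_eq_card_filter_two_le_iff.2 fun i _ => h3 i).symm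
  have hind : LinearIndependent ℝ fun i => vec0 n (b i) - vec0 n (a i) :=
    linearIndependent_of_top_le_span_of_card_eq_finrank
      (span_sub_eq_top_of_affineSpan_vadd_sum_segment x (hsum ▸ hxPi ▸ hdim)).ge
      (by simp [hcard, hT.1])
  have hU (i : I₂) : a i ∈ octantVertices T ∧ b i ∈ octantVertices T :=
    ⟨hE i (hab i).1, hE i (hab i).2⟩
  have hxmem : x ∈ ∑ i ∈ Finset.univ.filter (fun i => (E i).card = 1),
      convexHull ℝ (vec0 n '' ↑(E i)) := hx ▸ rfl
  exact ⟨hsum ▸ nablaT_subset_sum_segment hU hind hcard,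
    ⟨hPT ▸ mem_mdiff_cubeT hE1 hE2 hxmem hab hind hcard,
      mem_latt_of_mem_sum_convexHull (fun i hi => (Finset.mem_filter.1 hi).2) hxmem⟩,
    fun u hu => eq_of_vadd_nablaT_subset_vadd_sum_segment hU hind hcard (hsum ▸ hxPi ▸ hu)⟩

/-- With `P_T = Δ⁰_{S_1∩T} + ⋯ + Δ⁰_{S_m∩T}` `n`-dimensional, a fine mixed cell
`Π = conv(E_1) + ⋯ + conv(E_m)` of `P_T`, `Π̂ := Σ_{|E_i| ≥ 2} conv(E_i)` and `x := Σ_{|E_i|=1} w_i`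
(so `Π = x + Π̂`), the following are equivalent: (1) `∇_T ⊆ Π̂`; (2) `x ∈ (P_T − □_T) ∩ ℤ^n` and
`x` is the unique point `u` of `(P_T − □_T) ∩ ℤ^n` with `u + ∇_T ⊆ Π`; (3) every `|E_i| ≤ 2`,
i.e. `Π` is a zonotope. -/
theorem stmt7 (n m : ℕ) (S : Fin m → Finset (Fin n × Bool)) (hS : ∀ i, Adm n (S i))
    (T : Finset (Fin n × Bool)) (hT : AdSn n T)
    (PT : Set (Fin n → ℝ)) (hPT : PT = ∑ i : Fin m, simp0 n (S i ∩ T))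
    (hPdim : affineSpan ℝ PT = ⊤)
    (E : Fin m → Finset (Option (Fin n × Bool)))
    (hE1 : ∀ i, (E i).Nonempty)
    (hE2 : ∀ i, E i ⊆ insert none ((S i ∩ T).image some))
    (hE3 : (∑ i, ((E i).card - 1)) = n)
    (Pcell : Set (Fin n → ℝ))
    (hPcell : Pcell = ∑ i : Fin m, convexHull ℝ (vec0 n '' ↑(E i)))
    (hdim : affineSpan ℝ Pcell = ⊤)
    (Phat : Set (Fin n → ℝ))
    (hPhat : Phat = ∑ i ∈ Finset.univ.filter (fun i => 2 ≤ (E i).card),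
      convexHull ℝ (vec0 n '' ↑(E i)))
    (x : Fin n → ℝ)
    (hx : ({x} : Set (Fin n → ℝ)) = ∑ i ∈ Finset.univ.filter (fun i => (E i).card = 1),
      convexHull ℝ (vec0 n '' ↑(E i)))
    (hxPi : Pcell = x +ᵥ Phat) :
    ((nablaT n T ⊆ Phat) ↔ (∀ i, (E i).card ≤ 2)) ∧
    ((x ∈ mdiff PT (cubeT n T) ∩ latt n ∧ x +ᵥ nablaT n T ⊆ Pcell ∧
        ∀ u ∈ mdiff PT (cubeT n T) ∩ latt n, u +ᵥ nablaT n T ⊆ Pcell → u = x) ↔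
      (∀ i, (E i).card ≤ 2)) :=
  stmt7_general n m S T hT PT hPT E hE1 hE2 hE3 Pcell hdim Phat hPhat x hx hxPi
end
end

section
/- Let P ⊂ ℝ^n be a polytope each of whose edges (one-dimensional faces) is parallel to e_i + e_j, e_i − e_j, or e_i for some i, j ∈ [n], i.e., P is a type B generalized permutohedron. Then there exist real numbers y_S, indexed by the admissible sets S of signed vectors, such that P + Σ_{S : y_S < 0} (−y_S)Δ⁰_S = Σ_{S : y_S ≥ 0} y_SΔ⁰_S, i.e., P is the signed Minkowski sum Σ_{S admissible} y_SΔ⁰_S of the simplices Δ⁰_S. -/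
open Pointwise

noncomputable section

/-!
The support function `h_K(l) = max_{x ∈ K} l x` determines a compact convex set and turns
Minkowski sums into sums, so it suffices to find `y` with `h_P = ∑_S y_S h_{Δ⁰_S}`.

Since every edge of `P` is parallel to a type B root, a functional `w` orthogonal to no root has a
unique maximizer on `P`: otherwise the face it exposes contains an edge orthogonal to `w`. By
connectedness this maximizer is the same on a whole open Weyl chamber, so `h_P` is linear on each
closed chamber. Writing `u = ∑_k λ_k ρ_{S_k(u)}`, where `S_k(u)` consists of the `k + 1` largest
coordinates of `u` in absolute value with their signs and `ρ_S = ∑_{p ∈ S} p`, this gives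
`h_P(u) = ∑_k λ_k h_P(ρ_{S_k(u)})`, and likewise for each `Δ⁰_T`, for which
`h_{Δ⁰_T}(ρ_S) = [S ∩ T ≠ ∅]`. Finally the matrix `[S ∩ T ≠ ∅]` on admissible sets is invertible,
because `1 - [S ∩ T ≠ ∅]` extends to a Kronecker power of an invertible `3 × 3` matrix indexed by
the sign patterns `Fin n → Option Bool`; so `y` can be chosen with
`∑_T [S ∩ T ≠ ∅] y_T = h_P(ρ_S)`.
-/

open Filter Topology
open scoped Matrix

namespace ConvexBody

variable {E : Type*} [TopologicalSpace E] [AddCommGroup E] [Module ℝ E]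

section Add

variable [ContinuousAdd E]

def supportHom (l : E →L[ℝ] ℝ) : ConvexBody E →+ ℝ where
  toFun K := sSup (l '' K)
  map_zero' := by simp [coe_zero]
  map_add' K L := by
    rw [coe_add, Set.image_add]
    exact csSup_add (K.nonempty.image l) (K.isCompact.image l.continuous).bddAbove
      (L.nonempty.image l) (L.isCompact.image l.continuous).bddAbove

theorem supportHom_apply (l : E →L[ℝ] ℝ) (K : ConvexBody E) :
    supportHom l K = sSup (l '' K) := rfl

theorem le_supportHom (l : E →L[ℝ] ℝ) {K : ConvexBody E} {x : E} (hx : x ∈ K) :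
    l x ≤ supportHom l K :=
  le_csSup (K.isCompact.image l.continuous).bddAbove ⟨x, hx, rfl⟩

theorem coe_sum {ι : Type*} (s : Finset ι) (K : ι → ConvexBody E) :
    (↑(∑ i ∈ s, K i) : Set E) = ∑ i ∈ s, (K i : Set E) :=
  map_sum (⟨⟨(↑), coe_zero⟩, coe_add⟩ : ConvexBody E →+ Set E) K s

end Add

variable [IsTopologicalAddGroup E] [ContinuousSMul ℝ E]

theorem supportHom_smul (l : E →L[ℝ] ℝ) {c : ℝ} (hc : 0 ≤ c) (K : ConvexBody E) :
    supportHom l (c • K) = c * supportHom l K := by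
  rw [supportHom_apply, coe_smul, image_smul_set, Real.sSup_smul_of_nonneg hc]
  rfl

theorem le_of_supportHom_le [LocallyConvexSpace ℝ E] [T2Space E] {K L : ConvexBody E}
    (h : ∀ l, supportHom l K ≤ supportHom l L) : K ≤ L := by
  intro x hxK
  by_contra hxL
  obtain ⟨l, c, hlL, hlx⟩ := geometric_hahn_banach_closed_point L.convex L.isClosed hxL
  have hLc : supportHom l L ≤ c :=
    csSup_le (L.nonempty.image l) (by rintro _ ⟨y, hy, rfl⟩; exact (hlL y hy).le)
  linarith [le_supportHom l hxK, h l]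

theorem ext_supportHom [LocallyConvexSpace ℝ E] [T2Space E] {K L : ConvexBody E}
    (h : ∀ l, supportHom l K = supportHom l L) : K = L :=
  le_antisymm (le_of_supportHom_le fun l => (h l).le) (le_of_supportHom_le fun l => (h l).ge)

def ofFinset (V : Finset E) (hV : V.Nonempty) : ConvexBody E :=
  ⟨convexHull ℝ ↑V, convex_convexHull ℝ _, V.finite_toSet.isCompact_convexHull ℝ,
    (Finset.coe_nonempty.2 hV).convexHull⟩

@[simp]
theorem coe_ofFinset (V : Finset E) (hV : V.Nonempty) :
    (ofFinset V hV : Set E) = convexHull ℝ ↑V := rfl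

theorem supportHom_ofFinset {V : Finset E} (hV : V.Nonempty) (l : E →L[ℝ] ℝ) {x₀ : E}
    (hx₀ : x₀ ∈ V) (hmax : ∀ x ∈ V, l x ≤ l x₀) : supportHom l (ofFinset V hV) = l x₀ := by
  refine IsGreatest.csSup_eq ⟨⟨x₀, subset_convexHull ℝ _ hx₀, rfl⟩, ?_⟩
  rintro _ ⟨x, hx, rfl⟩
  exact convexHull_min hmax (convex_halfSpace_le l.isLinear _) hx

theorem add_sum_neg_smul_eq_sum_smul [LocallyConvexSpace ℝ E] [T2Space E] {ι : Type*}
    (s : Finset ι) (K : ConvexBody E) (L : ι → ConvexBody E) (y : ι → ℝ)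
    (h : ∀ l, supportHom l K = ∑ i ∈ s, y i * supportHom l (L i)) :
    (K : Set E) + ∑ i ∈ s with y i < 0, (-y i) • (L i : Set E) =
      ∑ i ∈ s with 0 ≤ y i, y i • (L i : Set E) := by
  simp_rw [← coe_smul, ← coe_sum, ← coe_add]
  congr 1
  refine ext_supportHom fun l => ?_
  rw [map_add, map_sum, map_sum, h, ← Finset.sum_filter_add_sum_filter_not s (fun i => y i < 0)]
  simp only [not_lt]
  rw [Finset.sum_congr rfl fun i hi => supportHom_smul l (Finset.mem_filter.1 hi).2 (L i),
    Finset.sum_congr rfl fun i hi =>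
      supportHom_smul l (neg_nonneg.2 (Finset.mem_filter.1 hi).2.le) (L i)]
  simp only [neg_mul, Finset.sum_neg_distrib]
  ring

end ConvexBody

namespace Matrix

variable {ι α R : Type*} [Fintype ι] [CommRing R]

def piKronecker (B : Matrix α α R) : Matrix (ι → α) (ι → α) R :=
  of fun f g => ∏ i, B (f i) (g i)

theorem piKronecker_mul [DecidableEq ι] [Fintype α] (B C : Matrix α α R) :
    (piKronecker B * piKronecker C : Matrix (ι → α) (ι → α) R) = piKronecker (B * C) := by
  ext f g
  simp only [piKronecker, mul_apply, of_apply, ← Finset.prod_mul_distrib]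
  rw [Finset.prod_univ_sum]
  simp [Fintype.piFinset_univ]

theorem piKronecker_one [DecidableEq α] [DecidableEq ι] :
    (piKronecker (1 : Matrix α α R) : Matrix (ι → α) (ι → α) R) = 1 := by
  ext f g
  simp only [piKronecker, of_apply, one_apply, Finset.prod_boole, Finset.mem_univ, true_implies,
    funext_iff]

end Matrix

section Maximizers

variable {ι : Type*} [Fintype ι]

def dotProductCLM (u : ι → ℝ) : (ι → ℝ) →L[ℝ] ℝ :=
  LinearMap.toContinuousLinearMap
    { toFun := (u ⬝ᵥ ·), map_add' := dotProduct_add u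
      map_smul' := fun c x => dotProduct_smul c u x }

@[simp]
theorem dotProductCLM_apply (u x : ι → ℝ) : dotProductCLM u x = u ⬝ᵥ x := rfl

theorem exists_eq_dotProductCLM [DecidableEq ι] (l : (ι → ℝ) →L[ℝ] ℝ) :
    ∃ u, l = dotProductCLM u := by
  refine ⟨fun i => l (Pi.single i 1), ContinuousLinearMap.ext fun x => ?_⟩
  conv_lhs => rw [← Finset.univ_sum_single x]
  simp only [map_sum, dotProductCLM_apply, dotProduct]
  refine Finset.sum_congr rfl fun i _ => ?_
  rw [show Pi.single i (x i) = x i • Pi.single i (1 : ℝ) by simp [← Pi.single_smul'], map_smul,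
    smul_eq_mul, mul_comm]

def maximizers (u : ι → ℝ) (X : Finset (ι → ℝ)) : Finset (ι → ℝ) :=
  X.filter fun x => ∀ y ∈ X, u ⬝ᵥ y ≤ u ⬝ᵥ x

variable {u w : ι → ℝ} {X : Finset (ι → ℝ)} {x y : ι → ℝ}

theorem mem_maximizers : x ∈ maximizers u X ↔ x ∈ X ∧ ∀ y ∈ X, u ⬝ᵥ y ≤ u ⬝ᵥ x :=
  Finset.mem_filter

theorem maximizers_subset : maximizers u X ⊆ X := Finset.filter_subset _ _

theorem maximizers_nonempty (hX : X.Nonempty) : (maximizers u X).Nonempty := by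
  obtain ⟨x, hx, hmax⟩ := X.exists_max_image (u ⬝ᵥ ·) hX
  exact ⟨x, mem_maximizers.2 ⟨hx, hmax⟩⟩

@[simp]
theorem maximizers_zero : maximizers 0 X = X := by
  ext x; simp [mem_maximizers]

theorem dotProduct_eq_of_mem_maximizers (hx : x ∈ maximizers u X) (hy : y ∈ maximizers u X) :
    u ⬝ᵥ x = u ⬝ᵥ y :=
  le_antisymm ((mem_maximizers.1 hy).2 x (maximizers_subset hx))
    ((mem_maximizers.1 hx).2 y (maximizers_subset hy))

theorem dotProduct_lt_of_notMem_maximizers (hx : x ∈ X) (hxu : x ∉ maximizers u X)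
    (hy : y ∈ maximizers u X) : u ⬝ᵥ x < u ⬝ᵥ y := by
  obtain ⟨z, hz, hlt⟩ : ∃ z ∈ X, u ⬝ᵥ x < u ⬝ᵥ z := by
    simpa [mem_maximizers, hx] using hxu
  exact hlt.trans_le ((mem_maximizers.1 hy).2 z hz)

theorem eventually_maximizers_add_smul (u w : ι → ℝ) (X : Finset (ι → ℝ)) :
    ∀ᶠ δ in 𝓝[>] (0 : ℝ), maximizers (u + δ • w) X = maximizers w (maximizers u X) := by
  set A := maximizers u X
  have hgap : ∀ᶠ δ in 𝓝 (0 : ℝ), ∀ x ∈ X \ A, ∀ a ∈ A,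
      u ⬝ᵥ x + δ * w ⬝ᵥ x < u ⬝ᵥ a + δ * w ⬝ᵥ a := by
    simp_rw [eventually_all_finset]
    intro x hx a ha
    have hlt := dotProduct_lt_of_notMem_maximizers (Finset.sdiff_subset hx)
      (Finset.mem_sdiff.1 hx).2 ha
    exact ContinuousAt.eventually_lt (by fun_prop) (by fun_prop) (by simpa using hlt)
  filter_upwards [nhdsWithin_le_nhds hgap, self_mem_nhdsWithin] with δ hδ (hδpos : 0 < δ)
  have hA : ∀ a ∈ A, ∀ b ∈ A, (u + δ • w) ⬝ᵥ b ≤ (u + δ • w) ⬝ᵥ a ↔ w ⬝ᵥ b ≤ w ⬝ᵥ a := by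
    intro a ha b hb
    simp only [add_dotProduct, smul_dotProduct, smul_eq_mul, dotProduct_eq_of_mem_maximizers ha hb,
      add_le_add_iff_left, mul_le_mul_iff_right₀ hδpos]
  have hout : ∀ x ∈ X, x ∉ A → ∀ a ∈ A, (u + δ • w) ⬝ᵥ x < (u + δ • w) ⬝ᵥ a := by
    intro x hx hxA a ha
    simpa [add_dotProduct, smul_dotProduct] using hδ x (Finset.mem_sdiff.2 ⟨hx, hxA⟩) a ha
  ext a
  simp only [mem_maximizers]
  constructor
  · rintro ⟨haX, hmax⟩
    have haA : a ∈ A := by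
      by_contra haA
      obtain ⟨b, hb⟩ := maximizers_nonempty (u := u) ⟨a, haX⟩
      exact (hout a haX haA b hb).not_ge (hmax b (maximizers_subset hb))
    exact ⟨haA, fun b hb => (hA a haA b hb).1 (hmax b (maximizers_subset hb))⟩
  · rintro ⟨haA, hmax⟩
    refine ⟨maximizers_subset haA, fun x hx => ?_⟩
    by_cases hxA : x ∈ A
    · exact (hA a haA x hxA).2 (hmax x hxA)
    · exact (hout x hx hxA a haA).le

theorem exists_maximizers_add_smul (u w : ι → ℝ) (X : Finset (ι → ℝ)) :
    ∃ v, maximizers v X = maximizers w (maximizers u X) :=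
  let ⟨_, h⟩ := (eventually_maximizers_add_smul u w X).exists
  ⟨_, h⟩

theorem dotProduct_self_pos {v : ι → ℝ} (hv : v ≠ 0) : 0 < v ⬝ᵥ v := by
  simpa using Matrix.dotProduct_self_star_pos_iff.2 hv

theorem sub_dotProduct_sub_self (x p : ι → ℝ) :
    (x - p) ⬝ᵥ (x - p) = x ⬝ᵥ x - 2 * (p ⬝ᵥ x) + p ⬝ᵥ p := by
  simp only [sub_dotProduct, dotProduct_sub, dotProduct_comm x p]; ring

/-- A point of maximal norm is the unique maximizer of its own dot product. -/
theorem exists_maximizers_eq_singleton (hX : X.Nonempty) : ∃ f p, maximizers f X = {p} := by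
  obtain ⟨p, hp, hmax⟩ := X.exists_max_image (fun x => x ⬝ᵥ x) hX
  have hlt : ∀ x ∈ X, x ≠ p → p ⬝ᵥ x < p ⬝ᵥ p := fun x hx hxp => by
    have hpos := dotProduct_self_pos (sub_ne_zero.2 hxp)
    linarith [hmax x hx, sub_dotProduct_sub_self x p]
  refine ⟨p, p, Finset.eq_singleton_iff_unique_mem.2 ⟨?_, fun x hx => ?_⟩⟩
  · refine mem_maximizers.2 ⟨hp, fun x hx => ?_⟩
    rcases eq_or_ne x p with rfl | hxp
    exacts [le_rfl, (hlt x hx hxp).le]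
  · obtain ⟨hxX, hxmax⟩ := mem_maximizers.1 hx
    by_contra hxp
    exact (hlt x hxX hxp).not_ge (hxmax p hp)

theorem exists_dotProduct_pos_neg {a b : ι → ℝ} (ha : a ≠ 0) (hb : ∀ c : ℝ, b ≠ c • a) :
    ∃ g, 0 < g ⬝ᵥ a ∧ g ⬝ᵥ b < 0 := by
  have haa : 0 < a ⬝ᵥ a := dotProduct_self_pos ha
  obtain ⟨c, b', rfl, hab'⟩ : ∃ (c : ℝ) (b' : ι → ℝ), b = b' + c • a ∧ b' ⬝ᵥ a = 0 := by
    refine ⟨a ⬝ᵥ b / a ⬝ᵥ a, b - (a ⬝ᵥ b / a ⬝ᵥ a) • a, by simp, ?_⟩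
    simp only [sub_dotProduct, smul_dotProduct, smul_eq_mul, dotProduct_comm b a]
    field_simp; ring
  have hb'b : b' ⬝ᵥ (b' + c • a) = b' ⬝ᵥ b' := by simp [dotProduct_add, hab']
  have hb' : 0 < b' ⬝ᵥ b' := dotProduct_self_pos fun h => hb c (by simp [h])
  refine ⟨a - ((a ⬝ᵥ (b' + c • a) + 1) / b' ⬝ᵥ b') • b', ?_, ?_⟩
  · simpa [sub_dotProduct, hab'] using haa
  · simp only [sub_dotProduct, smul_dotProduct, hb'b, smul_eq_mul]
    field_simp
    linarith

/-- Rotating a functional `f` with unique maximizer `p` towards `g` until a second point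
ties with `p`. -/
theorem exists_two_le_card_maximizers_notMem {f g p q r : ι → ℝ} (hp : maximizers f X = {p})
    (hq : q ∈ X) (hr : r ∈ X) (hgq : g ⬝ᵥ p < g ⬝ᵥ q) (hgr : g ⬝ᵥ r < g ⬝ᵥ p) :
    ∃ h, 2 ≤ (maximizers h X).card ∧ r ∉ maximizers h X := by
  have hpX : p ∈ X := maximizers_subset (hp ▸ Finset.mem_singleton_self p)
  have hfp : ∀ x ∈ X, f ⬝ᵥ x ≤ f ⬝ᵥ p := (mem_maximizers.1 (hp ▸ Finset.mem_singleton_self p)).2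
  set C := X.filter fun x => g ⬝ᵥ p < g ⬝ᵥ x
  -- the slope at which `x ∈ C` catches up with `p`
  set s : (ι → ℝ) → ℝ := fun x => (f ⬝ᵥ p - f ⬝ᵥ x) / (g ⬝ᵥ x - g ⬝ᵥ p)
  obtain ⟨x₀, hx₀C, hx₀min⟩ := C.exists_min_image s ⟨q, Finset.mem_filter.2 ⟨hq, hgq⟩⟩
  obtain ⟨hx₀X, hgx₀⟩ := Finset.mem_filter.1 hx₀C
  have hs₀ : 0 ≤ s x₀ := div_nonneg (by linarith [hfp x₀ hx₀X]) (by linarith)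
  set h := f + s x₀ • g
  have hh : ∀ x, h ⬝ᵥ x = f ⬝ᵥ x + s x₀ * g ⬝ᵥ x := fun x => by
    simp [h, add_dotProduct, smul_dotProduct]
  have hx₀ : h ⬝ᵥ x₀ = h ⬝ᵥ p := by
    rw [hh, hh]
    have : s x₀ * (g ⬝ᵥ x₀ - g ⬝ᵥ p) = f ⬝ᵥ p - f ⬝ᵥ x₀ := div_mul_cancel₀ _ (by linarith)
    linarith
  have hhp : ∀ x ∈ X, h ⬝ᵥ x ≤ h ⬝ᵥ p := by
    intro x hx
    rw [hh, hh]
    by_cases hgx : g ⬝ᵥ p < g ⬝ᵥ x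
    · have := (le_div_iff₀ (sub_pos.2 hgx)).1 (hx₀min x (Finset.mem_filter.2 ⟨hx, hgx⟩))
      linarith
    · nlinarith [hfp x hx]
  have hpmem : p ∈ maximizers h X := mem_maximizers.2 ⟨hpX, hhp⟩
  refine ⟨h, Finset.one_lt_card.2 ⟨p, hpmem, x₀, ?_, ?_⟩, fun hrmem => ?_⟩
  · exact mem_maximizers.2 ⟨hx₀X, fun y hy => hx₀ ▸ hhp y hy⟩
  · rintro rfl; exact lt_irrefl _ hgx₀
  · have hrp : r ≠ p := by rintro rfl; exact lt_irrefl _ hgr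
    have hfr : f ⬝ᵥ r < f ⬝ᵥ p := dotProduct_lt_of_notMem_maximizers hr
      (by rw [hp]; simpa using hrp) (hp ▸ Finset.mem_singleton_self p)
    have := dotProduct_eq_of_mem_maximizers hrmem hpmem
    rw [hh, hh] at this
    nlinarith

theorem exists_collinear_maximizers (hX : 2 ≤ X.card) :
    ∃ f, 2 ≤ (maximizers f X).card ∧ Collinear ℝ (maximizers f X : Set (ι → ℝ)) := by
  induction X using Finset.strongInduction with
  | H X ih =>
  by_cases hcol : Collinear ℝ (X : Set (ι → ℝ))
  · exact ⟨0, by rwa [maximizers_zero], by rwa [maximizers_zero]⟩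
  obtain ⟨f₀, p, hf₀⟩ := exists_maximizers_eq_singleton (Finset.card_pos.1 (by omega : 0 < X.card))
  have hpX : p ∈ X := maximizers_subset (hf₀ ▸ Finset.mem_singleton_self p)
  obtain ⟨q, hq, r, hr, hqp, hrq⟩ : ∃ q ∈ X, ∃ r ∈ X, q - p ≠ 0 ∧ ∀ c : ℝ, r - p ≠ c • (q - p) := by
    by_contra! hno
    apply hcol
    obtain ⟨q, hq, hqp⟩ := Finset.exists_mem_ne (by omega : 1 < X.card) p
    refine (collinear_iff_of_mem (Finset.mem_coe.2 hpX)).2 ⟨q - p, fun x hx => ?_⟩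
    obtain ⟨c, hc⟩ := hno q hq x hx (sub_ne_zero.2 hqp)
    exact ⟨c, by rw [vadd_eq_add, ← hc, sub_add_cancel]⟩
  obtain ⟨g, hgq, hgr⟩ := exists_dotProduct_pos_neg hqp hrq
  rw [dotProduct_sub, sub_pos] at hgq
  rw [dotProduct_sub, sub_neg] at hgr
  obtain ⟨h, hcard, hrh⟩ := exists_two_le_card_maximizers_notMem hf₀ hq hr hgq hgr
  have hssub : maximizers h X ⊂ X :=
    Finset.ssubset_iff_subset_ne.2 ⟨maximizers_subset, fun he => hrh (by rwa [he])⟩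
  obtain ⟨f₁, hf₁⟩ := ih _ hssub hcard
  obtain ⟨f, hf⟩ := exists_maximizers_add_smul h f₁ X
  exact ⟨f, hf ▸ hf₁⟩

theorem dotProduct_eq_of_mem_convexHull_maximizers {V : Finset (ι → ℝ)} {z₀ : ι → ℝ}
    (hz₀ : z₀ ∈ maximizers u V) (hx : x ∈ convexHull ℝ ↑(maximizers u V)) :
    u ⬝ᵥ x = u ⬝ᵥ z₀ :=
  convexHull_min (fun _ hz => dotProduct_eq_of_mem_maximizers hz hz₀)
    (convex_hyperplane (dotProductCLM u).isLinear _) hx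

theorem toExposed_dotProductCLM_convexHull {V : Finset (ι → ℝ)} (hV : V.Nonempty) (u : ι → ℝ) :
    (dotProductCLM u).toExposed (convexHull ℝ ↑V) = convexHull ℝ ↑(maximizers u V) := by
  obtain ⟨z₀, hz₀⟩ := maximizers_nonempty (u := u) hV
  have hle : ∀ y ∈ convexHull ℝ (V : Set (ι → ℝ)), u ⬝ᵥ y ≤ u ⬝ᵥ z₀ := fun y hy =>
    convexHull_min (fun _ hv => (mem_maximizers.1 hz₀).2 _ hv)
      (convex_halfSpace_le (dotProductCLM u).isLinear _) hy
  have hZV : convexHull ℝ ↑(maximizers u V) ⊆ convexHull ℝ (V : Set (ι → ℝ)) :=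
    convexHull_mono (Finset.coe_subset.2 maximizers_subset)
  ext x
  simp only [ContinuousLinearMap.toExposed, Set.mem_ofPred_eq, dotProductCLM_apply]
  constructor
  · rintro ⟨hxV, hxmax⟩
    have hx : u ⬝ᵥ x = u ⬝ᵥ z₀ :=
      le_antisymm (hle x hxV) (hxmax z₀ (subset_convexHull ℝ _ (maximizers_subset hz₀)))
    obtain hsub | ⟨v, hv⟩ := (V \ maximizers u V).eq_empty_or_nonempty
    · rwa [← (Finset.sdiff_eq_empty_iff_subset.1 hsub).antisymm maximizers_subset]
    -- the rest of `V` lies strictly below the face, so `x` has no weight on it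
    have hlt : ∀ y ∈ convexHull ℝ ↑(V \ maximizers u V), u ⬝ᵥ y < u ⬝ᵥ z₀ := fun y hy =>
      convexHull_min (fun v hv => dotProduct_lt_of_notMem_maximizers (Finset.mem_sdiff.1 hv).1
        (Finset.mem_sdiff.1 hv).2 hz₀) (convex_halfSpace_lt (dotProductCLM u).isLinear _) hy
    rw [← Finset.union_sdiff_of_subset (maximizers_subset (u := u) (X := V)), Finset.coe_union,
      convexHull_union ⟨z₀, hz₀⟩ ⟨v, hv⟩] at hxV
    obtain ⟨a, ha, b, hb, s, t, hs, ht, hst, rfl⟩ := mem_convexJoin.1 hxV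
    have hb' := hlt b hb
    rw [dotProduct_add, dotProduct_smul, dotProduct_smul, smul_eq_mul, smul_eq_mul,
      dotProduct_eq_of_mem_convexHull_maximizers hz₀ ha] at hx
    have ht0 : t * (u ⬝ᵥ z₀ - u ⬝ᵥ b) = 0 := by linear_combination (u ⬝ᵥ z₀) * hst - hx
    obtain rfl : t = 0 := (mul_eq_zero.1 ht0).resolve_right (sub_pos.2 hb').ne'
    simpa [show s = 1 by linarith] using ha
  · intro hx
    refine ⟨hZV hx, fun y hy => ?_⟩
    rw [dotProduct_eq_of_mem_convexHull_maximizers hz₀ hx]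
    exact hle y hy

theorem exists_edge_of_two_le_card_maximizers {V : Finset (ι → ℝ)}
    (hw : 2 ≤ (maximizers w V).card) :
    ∃ F : Set (ι → ℝ), IsExposed ℝ (convexHull ℝ ↑V) F ∧ Module.finrank ℝ (vectorSpan ℝ F) = 1 ∧
      ∀ x ∈ F, ∀ y ∈ F, w ⬝ᵥ x = w ⬝ᵥ y := by
  obtain ⟨f, hf2, hfcol⟩ := exists_collinear_maximizers hw
  obtain ⟨v, hv⟩ := exists_maximizers_add_smul w f V
  have hV : V.Nonempty := Finset.card_pos.1 (by
    have := Finset.card_le_card (maximizers_subset (u := w) (X := V)); omega)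
  refine ⟨(dotProductCLM v).toExposed (convexHull ℝ ↑V), ContinuousLinearMap.toExposed.isExposed,
    ?_, ?_⟩
  · rw [toExposed_dotProductCLM_convexHull hV, hv, ← direction_affineSpan, affineSpan_convexHull,
      direction_affineSpan]
    refine le_antisymm (collinear_iff_finrank_le_one.1 hfcol) (Nat.one_le_iff_ne_zero.2 ?_)
    rw [Ne, Submodule.finrank_eq_zero, vectorSpan_eq_bot_iff_subsingleton,
      Set.not_subsingleton_iff]
    exact Finset.one_lt_card_iff_nontrivial.1 hf2
  · obtain ⟨z₀, hz₀⟩ := Finset.card_pos.1 (by omega : 0 < (maximizers f (maximizers w V)).card)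
    have hw : ∀ x ∈ convexHull ℝ ↑(maximizers v V), w ⬝ᵥ x = w ⬝ᵥ z₀ := fun x hx =>
      convexHull_min (fun z hz => dotProduct_eq_of_mem_maximizers (maximizers_subset (hv ▸ hz))
        (maximizers_subset hz₀)) (convex_hyperplane (dotProductCLM w).isLinear _) hx
    rw [toExposed_dotProductCLM_convexHull hV]
    intro x hx y hy
    rw [hw x hx, hw y hy]

/-- The functionals for which `p` is the strict maximizer and those for which some point beats
`p` form two disjoint open sets, which together cover `C`. -/
theorem mem_maximizers_of_isPreconnected {C : Set (ι → ℝ)} (hC : IsPreconnected C)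
    (huniq : ∀ w ∈ C, (maximizers w X : Set (ι → ℝ)).Subsingleton) {w₀ : ι → ℝ} (hw₀ : w₀ ∈ C)
    (hw : w ∈ C) {p : ι → ℝ} (hp : p ∈ maximizers w₀ X) : p ∈ maximizers w X := by
  have hpX : p ∈ X := maximizers_subset hp
  set U := {w : ι → ℝ | ∀ x ∈ X.erase p, w ⬝ᵥ x < w ⬝ᵥ p}
  set W := ⋃ x ∈ X, {w : ι → ℝ | w ⬝ᵥ p < w ⬝ᵥ x}
  have hU : IsOpen U := by
    simp only [U, Set.ofPred_forall]
    exact isOpen_biInter_finset fun x _ => isOpen_lt (by fun_prop) (by fun_prop)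
  have hW : IsOpen W :=
    isOpen_biUnion fun x _ => isOpen_lt (by fun_prop) (by fun_prop)
  have hUW : Disjoint U W := Set.disjoint_left.2 fun w hwU hwW => by
    obtain ⟨x, hx, hlt : w ⬝ᵥ p < w ⬝ᵥ x⟩ := Set.mem_iUnion₂.1 hwW
    rcases eq_or_ne x p with rfl | hxp
    · exact lt_irrefl _ hlt
    · exact (hwU x (Finset.mem_erase.2 ⟨hxp, hx⟩)).not_gt hlt
  have hmemU : ∀ w ∈ C, p ∈ maximizers w X → w ∈ U := fun w hw hpw x hx => by
    obtain ⟨hxp, hxX⟩ := Finset.mem_erase.1 hx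
    refine ((mem_maximizers.1 hpw).2 x hxX).lt_of_ne fun heq => hxp ?_
    exact huniq w hw (mem_maximizers.2 ⟨hxX, fun y hy => heq ▸ (mem_maximizers.1 hpw).2 y hy⟩)
      hpw
  have hCU : C ⊆ U := by
    refine hC.subset_left_of_subset_union hU hW hUW (fun w hw => ?_) ⟨w₀, hw₀, hmemU w₀ hw₀ hp⟩
    by_cases hpw : p ∈ maximizers w X
    · exact Or.inl (hmemU w hw hpw)
    · right
      simpa [W, mem_maximizers, hpX] using hpw
  refine mem_maximizers.2 ⟨hpX, fun x hx => ?_⟩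
  rcases eq_or_ne x p with rfl | hxp
  · exact le_rfl
  · exact (hCU hw x (Finset.mem_erase.2 ⟨hxp, hx⟩)).le

theorem subsingleton_maximizers_of_edges {V : Finset (ι → ℝ)} {D : Set (ι → ℝ)}
    (hedges : ∀ F : Set (ι → ℝ), IsExposed ℝ (convexHull ℝ ↑V) F →
      Module.finrank ℝ (vectorSpan ℝ F) = 1 → ∃ v ∈ D, ∀ x ∈ F, ∀ y ∈ F, ∃ c : ℝ, x - y = c • v)
    (hw : ∀ v ∈ D, w ⬝ᵥ v = 0 → v = 0) : (maximizers w V : Set (ι → ℝ)).Subsingleton := by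
  by_contra hnt
  obtain ⟨F, hF, hrank, hwF⟩ := exists_edge_of_two_le_card_maximizers
    (Finset.one_lt_card_iff_nontrivial.2 (Set.not_subsingleton_iff.1 hnt))
  obtain ⟨v, hvD, hpar⟩ := hedges F hF hrank
  obtain ⟨x, hx, y, hy, hxy⟩ : F.Nontrivial := by
    rw [← Set.not_subsingleton_iff, ← vectorSpan_eq_bot_iff_subsingleton ℝ]
    intro h
    rw [h, finrank_bot] at hrank
    exact zero_ne_one hrank
  obtain ⟨c, hc⟩ := hpar x hx y hy
  have hcv : c * w ⬝ᵥ v = 0 := by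
    rw [← smul_eq_mul, ← dotProduct_smul, ← hc, dotProduct_sub, hwF x hx y hy, sub_self]
  rcases mul_eq_zero.1 hcv with rfl | hv
  · exact hxy (sub_eq_zero.1 (by simpa using hc))
  · exact hxy (sub_eq_zero.1 (by simpa [hw v hvD hv] using hc))

end Maximizers

section TypeB

variable {n : ℕ}

def boolSign (b : Bool) : ℝ := if b then 1 else -1

@[simp]
theorem boolSign_mul_self (b : Bool) : boolSign b * boolSign b = 1 := by
  cases b <;> norm_num [boolSign]

theorem abs_boolSign_mul (b : Bool) (x : ℝ) : |boolSign b * x| = |x| := by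
  cases b <;> simp [boolSign]

theorem sgnVec_eq_smul (p : Fin n × Bool) : sgnVec n p = boolSign p.2 • Pi.single p.1 1 := by
  rcases p with ⟨i, _ | _⟩ <;> simp [sgnVec, boolSign]

theorem dotProduct_sgnVec_s18 (u : Fin n → ℝ) (p : Fin n × Bool) :
    u ⬝ᵥ sgnVec n p = boolSign p.2 * u p.1 := by
  rw [sgnVec_eq_smul, dotProduct_smul, dotProduct_single, mul_one, smul_eq_mul]

def typeBRoots (n : ℕ) : Set (Fin n → ℝ) :=
  {v | ∃ i j : Fin n, v = Pi.single i 1 + Pi.single j 1 ∨ v = Pi.single i 1 - Pi.single j 1 ∨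
    v = Pi.single i 1}

def IsTypeBRegular (w : Fin n → ℝ) : Prop := ∀ v ∈ typeBRoots n, w ⬝ᵥ v = 0 → v = 0

theorem IsTypeBRegular.apply_ne_zero {w : Fin n → ℝ} (hw : IsTypeBRegular w) (i : Fin n) :
    w i ≠ 0 := fun h => by
  simpa using hw _ ⟨i, i, Or.inr (Or.inr rfl)⟩ (by simp [h])

theorem IsTypeBRegular.apply_ne_apply {w : Fin n → ℝ} (hw : IsTypeBRegular w) {i j : Fin n}
    (hij : i ≠ j) : w i ≠ w j := fun h => by
  have := congrFun (hw _ ⟨i, j, Or.inr (Or.inl rfl)⟩ (by simp [dotProduct_sub, h])) i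
  simp [hij] at this

theorem IsTypeBRegular.apply_ne_neg_apply {w : Fin n → ℝ} (hw : IsTypeBRegular w) (i j : Fin n) :
    w i ≠ -w j := fun h => by
  have := congrFun (hw _ ⟨i, j, Or.inl rfl⟩ (by simp [dotProduct_add, h])) i
  rcases eq_or_ne i j with rfl | hij
  · simp at this
  · simp [hij] at this

theorem IsTypeBRegular.boolSign_mul_apply_injective {w : Fin n → ℝ} (hw : IsTypeBRegular w) :
    Function.Injective fun p : Fin n × Bool => boolSign p.2 * w p.1 := by
  rintro ⟨i, β⟩ ⟨j, γ⟩ h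
  have h0 := hw.apply_ne_zero i
  rcases eq_or_ne i j with rfl | hij
  · cases β <;> cases γ <;> simp [boolSign] at h ⊢ <;> exact h0 (by linarith)
  · exfalso
    cases β <;> cases γ <;> simp only [boolSign] at h <;> norm_num at h
    · exact hw.apply_ne_apply hij h
    · exact hw.apply_ne_neg_apply j i h.symm
    · exact hw.apply_ne_neg_apply i j h
    · exact hw.apply_ne_apply hij h

def simplexVerts (S : Finset (Fin n × Bool)) : Finset (Fin n → ℝ) := insert 0 (S.image (sgnVec n))

theorem coe_simplexVerts (S : Finset (Fin n × Bool)) :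
    (simplexVerts S : Set (Fin n → ℝ)) = {0} ∪ sgnVec n '' ↑S := by
  rw [simplexVerts, Finset.coe_insert, Finset.coe_image, Set.insert_eq]

theorem simplexVerts_nonempty (S : Finset (Fin n × Bool)) : (simplexVerts S).Nonempty :=
  Finset.insert_nonempty _ _

/-- A regular functional takes pairwise distinct values at the vertices of `Δ⁰_S`. -/
theorem subsingleton_maximizers_simplexVerts {w : Fin n → ℝ} (hw : IsTypeBRegular w)
    (S : Finset (Fin n × Bool)) :
    (maximizers w (simplexVerts S) : Set (Fin n → ℝ)).Subsingleton := by
  have hval : ∀ x ∈ simplexVerts S,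
      x = 0 ∨ ∃ p, x = sgnVec n p ∧ w ⬝ᵥ x = boolSign p.2 * w p.1 := by
    intro x hx
    rcases Finset.mem_insert.1 hx with rfl | hx
    · exact Or.inl rfl
    · obtain ⟨p, -, rfl⟩ := Finset.mem_image.1 hx
      exact Or.inr ⟨p, rfl, dotProduct_sgnVec_s18 w p⟩
  have hne : ∀ p : Fin n × Bool, boolSign p.2 * w p.1 ≠ 0 := fun p => mul_ne_zero
    (by cases p.2 <;> norm_num [boolSign]) (hw.apply_ne_zero p.1)
  intro x hx y hy
  have hxy := dotProduct_eq_of_mem_maximizers hx hy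
  rcases hval x (maximizers_subset hx) with rfl | ⟨p, rfl, hp⟩ <;>
    rcases hval y (maximizers_subset hy) with rfl | ⟨q, rfl, hq⟩
  · rfl
  · exact absurd (by rw [← hq, ← hxy, dotProduct_zero]) (hne q)
  · exact absurd (by rw [← hp, hxy, dotProduct_zero]) (hne p)
  · rw [hw.boolSign_mul_apply_injective (hp.symm.trans (hxy.trans hq))]

def rayVec (S : Finset (Fin n × Bool)) : Fin n → ℝ := ∑ p ∈ S, sgnVec n p

theorem sgnVec_dotProduct_sgnVec (q p : Fin n × Bool) :
    sgnVec n q ⬝ᵥ sgnVec n p = if q.1 = p.1 then boolSign q.2 * boolSign p.2 else 0 := by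
  rw [dotProduct_sgnVec_s18, sgnVec_eq_smul]
  by_cases h : q.1 = p.1
  · simp [h, mul_comm]
  · simp [h, Ne.symm h]

theorem rayVec_dotProduct_sgnVec_of_mem {S : Finset (Fin n × Bool)} (hS : Adm n S)
    {p : Fin n × Bool} (hp : p ∈ S) : rayVec S ⬝ᵥ sgnVec n p = 1 := by
  rw [rayVec, sum_dotProduct, Finset.sum_eq_single p _ (absurd hp), sgnVec_dotProduct_sgnVec,
    if_pos rfl, boolSign_mul_self]
  rintro ⟨j, γ⟩ hq hqp
  rw [sgnVec_dotProduct_sgnVec, if_neg]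
  rintro (rfl : j = p.1)
  obtain ⟨i, β⟩ := p
  obtain rfl : γ = !β := by cases β <;> cases γ <;> simp_all
  cases β <;> exact hS.2 i (by simp_all)

theorem rayVec_dotProduct_sgnVec_nonpos_of_notMem {S : Finset (Fin n × Bool)}
    {p : Fin n × Bool} (hp : p ∉ S) : rayVec S ⬝ᵥ sgnVec n p ≤ 0 := by
  rw [rayVec, sum_dotProduct]
  refine Finset.sum_nonpos fun q hq => ?_
  rw [sgnVec_dotProduct_sgnVec]
  split_ifs with h
  · obtain ⟨i, β⟩ := p
    obtain ⟨j, γ⟩ := q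
    obtain rfl : j = i := h
    cases β <;> cases γ <;> simp_all [boolSign]
  · exact le_rfl

theorem supportHom_simplex_rayVec {S : Finset (Fin n × Bool)} (hS : Adm n S)
    (T : Finset (Fin n × Bool)) :
    ConvexBody.supportHom (dotProductCLM (rayVec S))
        (ConvexBody.ofFinset (simplexVerts T) (simplexVerts_nonempty T)) =
      if (S ∩ T).Nonempty then 1 else 0 := by
  have hle : ∀ x ∈ simplexVerts T, rayVec S ⬝ᵥ x ≤ 1 ∧ (x ∉ (S ∩ T).image (sgnVec n) →
      rayVec S ⬝ᵥ x ≤ 0) := by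
    intro x hx
    rcases Finset.mem_insert.1 hx with rfl | hx
    · simp
    obtain ⟨p, hpT, rfl⟩ := Finset.mem_image.1 hx
    by_cases hpS : p ∈ S
    · exact ⟨(rayVec_dotProduct_sgnVec_of_mem hS hpS).le,
        fun h => absurd (Finset.mem_image_of_mem _ (Finset.mem_inter.2 ⟨hpS, hpT⟩)) h⟩
    · have := rayVec_dotProduct_sgnVec_nonpos_of_notMem hpS
      exact ⟨by linarith, fun _ => this⟩
  split_ifs with h
  · obtain ⟨p, hp⟩ := h
    rw [← rayVec_dotProduct_sgnVec_of_mem hS (Finset.mem_inter.1 hp).1]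
    exact ConvexBody.supportHom_ofFinset _ _ (Finset.mem_insert_of_mem (Finset.mem_image_of_mem _
      (Finset.mem_inter.1 hp).2)) fun x hx => by
        simpa [rayVec_dotProduct_sgnVec_of_mem hS (Finset.mem_inter.1 hp).1] using (hle x hx).1
  · rw [← dotProduct_zero (rayVec S)]
    exact ConvexBody.supportHom_ofFinset _ _ (Finset.mem_insert_self _ _) fun x hx => by
      simpa [Finset.not_nonempty_iff_eq_empty.1 h] using (hle x hx).2

def chamberCoord (σ : Equiv.Perm (Fin n)) (b : Fin n → Bool) (w : Fin n → ℝ) (j : Fin n) : ℝ :=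
  boolSign (b j) * w (σ j)

def openChamber (σ : Equiv.Perm (Fin n)) (b : Fin n → Bool) : Set (Fin n → ℝ) :=
  {w | StrictAnti (chamberCoord σ b w) ∧ ∀ j, 0 < chamberCoord σ b w j}

def closedChamber (σ : Equiv.Perm (Fin n)) (b : Fin n → Bool) : Set (Fin n → ℝ) :=
  {w | Antitone (chamberCoord σ b w) ∧ ∀ j, 0 ≤ chamberCoord σ b w j}

variable {σ : Equiv.Perm (Fin n)} {b : Fin n → Bool}

theorem chamberCoord_add_smul (w ρ : Fin n → ℝ) (t : ℝ) :
    chamberCoord σ b (w + t • ρ) = fun j => chamberCoord σ b w j + t * chamberCoord σ b ρ j := by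
  ext j; simp only [chamberCoord, Pi.add_apply, Pi.smul_apply, smul_eq_mul]; ring

theorem isTypeBRegular_of_mem_openChamber {w : Fin n → ℝ} (hw : w ∈ openChamber σ b) :
    IsTypeBRegular w := by
  have habs : ∀ j, |w (σ j)| = chamberCoord σ b w j := fun j => by
    rw [← abs_boolSign_mul (b j), ← chamberCoord, abs_of_pos (hw.2 j)]
  have hinj : Function.Injective fun i => |w i| := fun i i' h => by
    simpa using hw.1.injective (a₁ := σ.symm i) (a₂ := σ.symm i') (by simpa [← habs] using h)
  have hne : ∀ i, w i ≠ 0 := fun i h => by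
    have := hw.2 (σ.symm i)
    rw [← habs, Equiv.apply_symm_apply, h, abs_zero] at this
    exact lt_irrefl _ this
  rintro v ⟨i, j, rfl | rfl | rfl⟩ hv
  · rw [dotProduct_add, dotProduct_single, dotProduct_single, mul_one, mul_one,
      add_eq_zero_iff_eq_neg] at hv
    obtain rfl := hinj (show |w i| = |w j| by rw [hv, abs_neg])
    exact absurd (by linarith : w i = 0) (hne i)
  · rw [dotProduct_sub, dotProduct_single, dotProduct_single, mul_one, mul_one, sub_eq_zero] at hv
    obtain rfl := hinj (congrArg abs hv)
    exact sub_self _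
  · exact absurd (by simpa using hv) (hne i)

theorem convex_openChamber : Convex ℝ (openChamber σ b) := by
  intro w hw w' hw' s t hs ht hst
  have hc : chamberCoord σ b (s • w + t • w') =
      fun j => s * chamberCoord σ b w j + t * chamberCoord σ b w' j := by
    ext j; simp only [chamberCoord, Pi.add_apply, Pi.smul_apply, smul_eq_mul]; ring
  rw [openChamber, Set.mem_ofPred_eq, hc]
  rcases hs.eq_or_lt with rfl | hs
  · obtain rfl : t = 1 := by linarith
    simp only [zero_mul, zero_add, one_mul]
    exact hw'
  refine ⟨fun j k hjk => ?_, fun j => ?_⟩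
  · nlinarith [hw.1 hjk, hw'.1.antitone hjk.le]
  · nlinarith [hw.2 j, hw'.2 j]

theorem add_smul_mem_openChamber {w ρ : Fin n → ℝ} (hw : w ∈ openChamber σ b)
    (hρ : ρ ∈ closedChamber σ b) {t : ℝ} (ht : 0 ≤ t) : w + t • ρ ∈ openChamber σ b := by
  rw [openChamber, Set.mem_ofPred_eq, chamberCoord_add_smul]
  exact ⟨hw.1.add_antitone fun j k hjk => mul_le_mul_of_nonneg_left (hρ.1 hjk) ht,
    fun j => add_pos_of_pos_of_nonneg (hw.2 j) (mul_nonneg ht (hρ.2 j))⟩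

theorem openChamber_nonempty (σ : Equiv.Perm (Fin n)) (b : Fin n → Bool) :
    (openChamber σ b).Nonempty := by
  refine ⟨fun i => boolSign (b (σ.symm i)) * (n - σ.symm i), ?_, fun j => ?_⟩
  · intro j k hjk
    simp only [chamberCoord, Equiv.symm_apply_apply, ← mul_assoc, boolSign_mul_self, one_mul]
    exact sub_lt_sub_left (by exact_mod_cast hjk) _
  · simp only [chamberCoord, Equiv.symm_apply_apply, ← mul_assoc, boolSign_mul_self, one_mul]
    exact sub_pos.2 (by exact_mod_cast j.isLt)

theorem exists_mem_maximizers_closedChamber {V : Finset (Fin n → ℝ)} (hV : V.Nonempty)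
    (huniq : ∀ w, IsTypeBRegular w → (maximizers w V : Set (Fin n → ℝ)).Subsingleton)
    (σ : Equiv.Perm (Fin n)) (b : Fin n → Bool) :
    ∃ v₀ ∈ V, ∀ ρ ∈ closedChamber σ b, v₀ ∈ maximizers ρ V := by
  obtain ⟨w₀, hw₀⟩ := openChamber_nonempty σ b
  obtain ⟨v₀, hv₀⟩ := maximizers_nonempty (u := w₀) hV
  have hconst : ∀ w ∈ openChamber σ b, v₀ ∈ maximizers w V := fun w hw =>
    mem_maximizers_of_isPreconnected convex_openChamber.isPreconnected
      (fun w hw => huniq w (isTypeBRegular_of_mem_openChamber hw)) hw₀ hw hv₀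
  refine ⟨v₀, maximizers_subset hv₀, fun ρ hρ =>
    mem_maximizers.2 ⟨maximizers_subset hv₀, fun x hx => ?_⟩⟩
  -- `v₀` maximizes `w₀ + t ρ` for every `t > 0`; let `t → ∞`
  by_contra! hlt
  set t := (w₀ ⬝ᵥ v₀ - w₀ ⬝ᵥ x + 1) / (ρ ⬝ᵥ x - ρ ⬝ᵥ v₀)
  have ht : t * (ρ ⬝ᵥ x - ρ ⬝ᵥ v₀) = w₀ ⬝ᵥ v₀ - w₀ ⬝ᵥ x + 1 :=
    div_mul_cancel₀ _ (sub_pos.2 hlt).ne'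
  have hw₀x := (mem_maximizers.1 hv₀).2 x hx
  have ht0 : 0 ≤ t := (div_pos (by linarith) (sub_pos.2 hlt)).le
  have := (mem_maximizers.1 (hconst _ (add_smul_mem_openChamber hw₀ hρ ht0))).2 x hx
  simp only [add_dotProduct, smul_dotProduct, smul_eq_mul] at this
  nlinarith

def sortPerm (u : Fin n → ℝ) : Equiv.Perm (Fin n) := Tuple.sort fun i => -|u i|

def sortSign (u : Fin n → ℝ) (j : Fin n) : Bool := decide (0 ≤ u (sortPerm u j))

def chainSet (u : Fin n → ℝ) (k : Fin n) : Finset (Fin n × Bool) :=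
  (Finset.Iic k).image fun j => (sortPerm u j, sortSign u j)

/-- The padding by `0` makes the last chain coefficient the smallest `|u i|`. -/
def sortedAbs (u : Fin n → ℝ) (j : ℕ) : ℝ := if h : j < n then |u (sortPerm u ⟨j, h⟩)| else 0

def chainCoeff (u : Fin n → ℝ) (k : Fin n) : ℝ := sortedAbs u k - sortedAbs u (k + 1)

theorem sortedAbs_antitone (u : Fin n → ℝ) : Antitone (sortedAbs u) := by
  intro j k hjk
  unfold sortedAbs
  split_ifs with hk hj hj
  · have := Tuple.monotone_sort (fun i => -|u i|) (show (⟨j, hj⟩ : Fin n) ≤ ⟨k, hk⟩ from hjk)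
    simp only [Function.comp_apply, neg_le_neg_iff] at this
    exact this
  · omega
  · exact abs_nonneg _
  · exact le_rfl

theorem chainCoeff_nonneg (u : Fin n → ℝ) (k : Fin n) : 0 ≤ chainCoeff u k :=
  sub_nonneg.2 (sortedAbs_antitone u (Nat.le_succ k))

theorem boolSign_sortSign_mul_abs (u : Fin n → ℝ) (j : Fin n) :
    boolSign (sortSign u j) * |u (sortPerm u j)| = u (sortPerm u j) := by
  by_cases h : 0 ≤ u (sortPerm u j)
  · simp [sortSign, boolSign, h, abs_of_nonneg h]
  · simp [sortSign, boolSign, h, abs_of_neg (not_le.1 h)]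

theorem adm_chainSet (u : Fin n → ℝ) (k : Fin n) : Adm n (chainSet u k) := by
  refine ⟨⟨_, Finset.mem_image_of_mem _ (Finset.mem_Iic.2 le_rfl)⟩, fun i ⟨h₁, h₂⟩ => ?_⟩
  obtain ⟨j₁, -, hj₁⟩ := Finset.mem_image.1 h₁
  obtain ⟨j₂, -, hj₂⟩ := Finset.mem_image.1 h₂
  simp only [Prod.mk.injEq] at hj₁ hj₂
  obtain rfl := (sortPerm u).injective (hj₁.1.trans hj₂.1.symm)
  exact absurd (hj₁.2.symm.trans hj₂.2) (by decide)

theorem rayVec_chainSet_apply (u : Fin n → ℝ) (k j : Fin n) :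
    rayVec (chainSet u k) (sortPerm u j) = if j ≤ k then boolSign (sortSign u j) else 0 := by
  rw [rayVec, chainSet,
    Finset.sum_image fun _ _ _ _ h => (sortPerm u).injective (Prod.ext_iff.1 h).1,
    Finset.sum_apply]
  simp_rw [sgnVec_eq_smul, Pi.smul_apply, Pi.single_apply, (sortPerm u).injective.eq_iff,
    smul_eq_mul, mul_ite, mul_one, mul_zero]
  rw [Finset.sum_ite_eq]
  simp

theorem chamberCoord_rayVec_chainSet (u : Fin n → ℝ) (k j : Fin n) :
    chamberCoord (sortPerm u) (sortSign u) (rayVec (chainSet u k)) j = if j ≤ k then 1 else 0 := by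
  rw [chamberCoord, rayVec_chainSet_apply]
  split_ifs <;> simp

theorem rayVec_chainSet_mem_closedChamber (u : Fin n → ℝ) (k : Fin n) :
    rayVec (chainSet u k) ∈ closedChamber (sortPerm u) (sortSign u) := by
  refine ⟨fun j j' hjj' => ?_, fun j => ?_⟩ <;> simp only [chamberCoord_rayVec_chainSet]
  · by_cases hj' : j' ≤ k
    · simp [hj', hjj'.trans hj']
    · by_cases hj : j ≤ k <;> simp [hj, hj']
  · split_ifs <;> norm_num

theorem sum_chainCoeff_smul_rayVec (u : Fin n → ℝ) :
    ∑ k, chainCoeff u k • rayVec (chainSet u k) = u := by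
  ext i
  obtain ⟨j, rfl⟩ := (sortPerm u).surjective i
  simp only [Finset.sum_apply, Pi.smul_apply, smul_eq_mul, rayVec_chainSet_apply, mul_ite,
    mul_zero]
  rw [← Finset.sum_filter, ← Finset.sum_mul, ← boolSign_sortSign_mul_abs u j, mul_comm]
  congr 1
  have htele : ∑ k ∈ Finset.Ico (j : ℕ) n, (sortedAbs u k - sortedAbs u (k + 1)) =
      sortedAbs u j := by
    have := Finset.sum_Ico_sub (fun k => -sortedAbs u k) j.isLt.le
    have hn : sortedAbs u n = 0 := dif_neg (lt_irrefl n)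
    simp only [sub_neg_eq_add, neg_add_eq_sub] at this
    rw [this, hn, sub_zero]
  have hIco : Finset.Ico (j : ℕ) n = (Finset.univ.filter (j ≤ ·)).map Fin.valEmbedding := by
    ext k
    simp only [Finset.mem_map, Finset.mem_filter, Finset.mem_univ, true_and,
      Fin.valEmbedding_apply, Finset.mem_Ico]
    exact ⟨fun hk => ⟨⟨k, hk.2⟩, hk.1, rfl⟩, by rintro ⟨k, hk, rfl⟩; exact ⟨hk, k.isLt⟩⟩
  rw [sortedAbs, dif_pos j.isLt, hIco, Finset.sum_map] at htele
  exact htele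

theorem dotProduct_eq_sum_chainCoeff (u x : Fin n → ℝ) :
    u ⬝ᵥ x = ∑ k, chainCoeff u k * rayVec (chainSet u k) ⬝ᵥ x := by
  conv_lhs => rw [← sum_chainCoeff_smul_rayVec u]
  simp only [sum_dotProduct, smul_dotProduct, smul_eq_mul]

/-- A single vertex maximizes every ray `ρ_{S_k(u)}` of the chamber of `u`, hence also `u`. -/
theorem supportHom_eq_sum_chainCoeff {V : Finset (Fin n → ℝ)} (hV : V.Nonempty)
    (huniq : ∀ w, IsTypeBRegular w → (maximizers w V : Set (Fin n → ℝ)).Subsingleton)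
    (u : Fin n → ℝ) :
    ConvexBody.supportHom (dotProductCLM u) (ConvexBody.ofFinset V hV) =
      ∑ k, chainCoeff u k * ConvexBody.supportHom (dotProductCLM (rayVec (chainSet u k)))
        (ConvexBody.ofFinset V hV) := by
  obtain ⟨v₀, hv₀V, hv₀⟩ := exists_mem_maximizers_closedChamber hV huniq (sortPerm u) (sortSign u)
  have hρ : ∀ k, v₀ ∈ maximizers (rayVec (chainSet u k)) V := fun k =>
    hv₀ _ (rayVec_chainSet_mem_closedChamber u k)
  have hu : ∀ x ∈ V, u ⬝ᵥ x ≤ u ⬝ᵥ v₀ := fun x hx => by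
    rw [dotProduct_eq_sum_chainCoeff u x, dotProduct_eq_sum_chainCoeff u v₀]
    exact Finset.sum_le_sum fun k _ =>
      mul_le_mul_of_nonneg_left ((mem_maximizers.1 (hρ k)).2 x hx) (chainCoeff_nonneg u k)
  rw [ConvexBody.supportHom_ofFinset hV _ hv₀V hu, dotProductCLM_apply,
    dotProduct_eq_sum_chainCoeff]
  refine Finset.sum_congr rfl fun k _ => ?_
  rw [ConvexBody.supportHom_ofFinset hV _ hv₀V (mem_maximizers.1 (hρ k)).2, dotProductCLM_apply]

end TypeB

section Incidence

variable {n : ℕ}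

def toPattern (S : Finset (Fin n × Bool)) (i : Fin n) : Option Bool :=
  if (i, true) ∈ S then some true else if (i, false) ∈ S then some false else none

def ofPattern (g : Fin n → Option Bool) : Finset (Fin n × Bool) :=
  Finset.univ.filter fun p => g p.1 = some p.2

theorem mem_ofPattern {g : Fin n → Option Bool} {p : Fin n × Bool} :
    p ∈ ofPattern g ↔ g p.1 = some p.2 := by
  simp [ofPattern]

theorem toPattern_eq_some_iff {S : Finset (Fin n × Bool)} (hS : Adm n S) {i : Fin n} {b : Bool} :
    toPattern S i = some b ↔ (i, b) ∈ S := by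
  have := hS.2 i
  unfold toPattern
  cases b <;> split_ifs <;> simp_all

theorem ofPattern_toPattern {S : Finset (Fin n × Bool)} (hS : Adm n S) :
    ofPattern (toPattern S) = S := by
  ext ⟨i, b⟩
  rw [mem_ofPattern, toPattern_eq_some_iff hS]

theorem toPattern_injective : Function.Injective fun S : {S // Adm n S} => toPattern S.1 :=
  fun S T h => Subtype.ext <| by
    rw [← ofPattern_toPattern S.2, ← ofPattern_toPattern T.2]
    exact congrArg ofPattern h

theorem toPattern_ne_none {S : Finset (Fin n × Bool)} (hS : Adm n S) :
    toPattern S ≠ fun _ => none := fun h => by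
  obtain ⟨⟨i, b⟩, hp⟩ := hS.1
  simpa [h] using (toPattern_eq_some_iff hS).2 hp

theorem adm_ofPattern {g : Fin n → Option Bool} (h : (ofPattern g).Nonempty) :
    Adm n (ofPattern g) :=
  ⟨h, fun i ⟨h₁, h₂⟩ => by
    rw [mem_ofPattern] at h₁ h₂
    exact absurd (h₁.symm.trans h₂) (by simp)⟩

/-- Disjointness of sign patterns is the product over the coordinates of this factor. -/
def disjointFactor : Matrix (Option Bool) (Option Bool) ℝ :=
  Matrix.of fun a c => if a = none ∨ a ≠ c then 1 else 0

def disjointFactorInv : Matrix (Option Bool) (Option Bool) ℝ :=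
  Matrix.of fun a c => match a, c with
    | none, none => -1
    | none, some _ => 1
    | some _, none => 1
    | some a, some c => if a = c then -1 else 0

theorem disjointFactorInv_mul : disjointFactorInv * disjointFactor = 1 := by
  ext a c
  rcases a with _ | _ | _ <;> rcases c with _ | _ | _ <;>
    simp [Matrix.mul_apply, Fintype.sum_option, disjointFactor, disjointFactorInv]
  norm_num

theorem piKronecker_disjointFactor_toPattern (g : Fin n → Option Bool)
    {T : Finset (Fin n × Bool)} (hT : Adm n T) :
    Matrix.piKronecker disjointFactor g (toPattern T) =
      if Disjoint (ofPattern g) T then 1 else 0 := by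
  simp only [Matrix.piKronecker, disjointFactor, Matrix.of_apply, Finset.prod_boole,
    Finset.mem_univ, true_implies]
  congr 1
  rw [Finset.disjoint_left, eq_iff_iff]
  constructor
  · rintro h ⟨i, b⟩ hg hiT
    rw [mem_ofPattern] at hg
    rcases h i with h | h
    · simp_all
    · exact h (by rw [hg, (toPattern_eq_some_iff hT).2 hiT])
  · intro h i
    by_contra! hc
    obtain ⟨b, hb⟩ := Option.ne_none_iff_exists'.1 hc.1
    exact h (mem_ofPattern.2 hb) ((toPattern_eq_some_iff hT).1 (hc.2 ▸ hb))

theorem piKronecker_disjointFactor_none (g : Fin n → Option Bool) :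
    Matrix.piKronecker disjointFactor g (fun _ => none) = 1 := by
  simp [Matrix.piKronecker, disjointFactor, em]

open scoped Classical

def intersectionMatrix (n : ℕ) : Matrix {S // Adm n S} {S // Adm n S} ℝ :=
  Matrix.of fun S T => if (S.1 ∩ T.1).Nonempty then 1 else 0

/-- `[S ∩ T = ∅] = 1 - [S ∩ T ≠ ∅]`, and the empty pattern is disjoint from every `T`. -/
theorem sum_piKronecker_disjointFactor_mul {y : {S // Adm n S} → ℝ}
    (hy : intersectionMatrix n *ᵥ y = 0) (f : Fin n → Option Bool) :
    ∑ T : {S // Adm n S}, Matrix.piKronecker disjointFactor f (toPattern T.1) * y T = ∑ T, y T := by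
  simp only [piKronecker_disjointFactor_toPattern f (Subtype.prop _)]
  by_cases hf : (ofPattern f).Nonempty
  · have hS := congrFun hy ⟨_, adm_ofPattern hf⟩
    simp only [intersectionMatrix, Matrix.mulVec, dotProduct, Matrix.of_apply,
      Pi.zero_apply, ← Finset.not_disjoint_iff_nonempty_inter, ite_not] at hS
    have hT : ∀ T : {S // Adm n S}, (if Disjoint (ofPattern f) T.1 then 1 else 0) * y T =
        y T - (if Disjoint (ofPattern f) T.1 then 0 else 1) * y T := fun T => by
      split_ifs <;> ring
    rw [Finset.sum_congr rfl fun T _ => hT T, Finset.sum_sub_distrib, hS, sub_zero]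
  · simp [Finset.not_nonempty_iff_eq_empty.1 hf]

theorem eq_zero_of_intersectionMatrix_mulVec_eq_zero {y : {S // Adm n S} → ℝ}
    (hy : intersectionMatrix n *ᵥ y = 0) : y = 0 := by
  set A : Matrix (Fin n → Option Bool) (Fin n → Option Bool) ℝ :=
    Matrix.piKronecker disjointFactor
  set c := ∑ T, y T
  -- extend `y` to all sign patterns, with the value `-c` at the empty pattern
  set Y : (Fin n → Option Bool) → ℝ := fun g =>
    ∑ T : {S // Adm n S}, (if toPattern T.1 = g then y T else 0) -
      if g = fun _ => none then c else 0
  have hAY : A *ᵥ Y = 0 := by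
    ext f
    have h₁ : ∑ g, A f g * ∑ T : {S // Adm n S}, (if toPattern T.1 = g then y T else 0) =
        ∑ T : {S // Adm n S}, A f (toPattern T.1) * y T := by
      simp only [Finset.mul_sum, mul_ite, mul_zero]
      rw [Finset.sum_comm]
      simp
    have h₂ : ∑ g, A f g * (if g = fun _ => none then c else 0) = c := by
      simp [A, piKronecker_disjointFactor_none]
    simp only [Matrix.mulVec, dotProduct, Y, mul_sub, Finset.sum_sub_distrib, h₁, h₂, Pi.zero_apply]
    exact sub_eq_zero.2 (sum_piKronecker_disjointFactor_mul hy f)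
  have hY : Y = 0 := by
    have := congrArg (Matrix.piKronecker disjointFactorInv *ᵥ ·) hAY
    simpa only [Matrix.mulVec_mulVec, A, Matrix.piKronecker_mul, disjointFactorInv_mul,
      Matrix.piKronecker_one, Matrix.one_mulVec, Matrix.mulVec_zero] using this
  ext T
  have := congrFun hY (toPattern T.1)
  simp only [Y, toPattern_injective.eq_iff, Finset.sum_ite_eq', Finset.mem_univ, if_true,
    if_neg (toPattern_ne_none T.2), sub_zero, Pi.zero_apply] at this
  exact this

theorem isUnit_intersectionMatrix (n : ℕ) : IsUnit (intersectionMatrix n) :=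
  Matrix.mulVec_injective_iff_isUnit.1 fun y y' h => sub_eq_zero.1 <|
    eq_zero_of_intersectionMatrix_mulVec_eq_zero (by rw [Matrix.mulVec_sub, h, sub_self])

end Incidence

open scoped Classical in
/-- Both sides are additive along chain decompositions, and `h_{Δ⁰_T}(ρ_S) = [S ∩ T ≠ ∅]`. -/
theorem supportHom_eq_sum_simplex {n : ℕ} {V : Finset (Fin n → ℝ)} (hV : V.Nonempty)
    (huniq : ∀ w, IsTypeBRegular w → (maximizers w V : Set (Fin n → ℝ)).Subsingleton)
    {y : {S // Adm n S} → ℝ}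
    (hy : intersectionMatrix n *ᵥ y =
      fun S => ConvexBody.supportHom (dotProductCLM (rayVec S.1)) (ConvexBody.ofFinset V hV))
    (u : Fin n → ℝ) :
    ConvexBody.supportHom (dotProductCLM u) (ConvexBody.ofFinset V hV) =
      ∑ T, y T * ConvexBody.supportHom (dotProductCLM u)
        (ConvexBody.ofFinset (simplexVerts T.1) (simplexVerts_nonempty T.1)) := by
  set chain : Fin n → {S // Adm n S} := fun k => ⟨chainSet u k, adm_chainSet u k⟩
  have hΔ : ∀ T : {S // Adm n S}, ConvexBody.supportHom (dotProductCLM u)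
      (ConvexBody.ofFinset (simplexVerts T.1) (simplexVerts_nonempty T.1)) =
        ∑ k, chainCoeff u k * intersectionMatrix n (chain k) T := fun T => by
    rw [supportHom_eq_sum_chainCoeff _ fun w hw => subsingleton_maximizers_simplexVerts hw T.1]
    simp [chain, intersectionMatrix, supportHom_simplex_rayVec (adm_chainSet u _)]
  calc ConvexBody.supportHom (dotProductCLM u) (ConvexBody.ofFinset V hV)
      = ∑ k, chainCoeff u k * (intersectionMatrix n *ᵥ y) (chain k) := by
        rw [hy, supportHom_eq_sum_chainCoeff hV huniq]
    _ = ∑ T, y T * ∑ k, chainCoeff u k * intersectionMatrix n (chain k) T := by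
        simp only [Matrix.mulVec, dotProduct, Finset.mul_sum]
        rw [Finset.sum_comm]
        exact Finset.sum_congr rfl fun _ _ => Finset.sum_congr rfl fun _ _ => by ring
    _ = _ := by simp_rw [hΔ]

open scoped Classical in
/-- Every type B generalized permutohedron `P ⊂ ℝ^n` (a polytope each of whose
edges, i.e. one-dimensional faces, is parallel to `e_i + e_j`, `e_i − e_j`, or `e_i` for some
`i, j ∈ [n]`) is a signed Minkowski sum `Σ_{S admissible} y_S Δ⁰_S`: there are reals `y_S` with
`P + Σ_{y_S < 0} (−y_S)Δ⁰_S = Σ_{y_S ≥ 0} y_S Δ⁰_S`. -/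
theorem stmt18 (n : ℕ) (P : Set (Fin n → ℝ))
    (hpoly : ∃ V : Finset (Fin n → ℝ), V.Nonempty ∧ P = convexHull ℝ ↑V)
    (hedges : ∀ F : Set (Fin n → ℝ), IsExposed ℝ P F →
      Module.finrank ℝ (vectorSpan ℝ F) = 1 →
      ∃ v : Fin n → ℝ,
        (∃ i j : Fin n,
          v = Pi.single i (1 : ℝ) + Pi.single j (1 : ℝ) ∨
          v = Pi.single i (1 : ℝ) - Pi.single j (1 : ℝ) ∨
          v = Pi.single i (1 : ℝ)) ∧
        ∀ x ∈ F, ∀ y ∈ F, ∃ c : ℝ, x - y = c • v) :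
    ∃ y : {S : Finset (Fin n × Bool) // Adm n S} → ℝ,
      P + ∑ S ∈ Finset.univ.filter
            (fun S : {S : Finset (Fin n × Bool) // Adm n S} => y S < 0),
          (-y S) • simp0 n S.1 =
        ∑ S ∈ Finset.univ.filter
            (fun S : {S : Finset (Fin n × Bool) // Adm n S} => 0 ≤ y S),
          y S • simp0 n S.1 := by
  obtain ⟨V, hV, rfl⟩ := hpoly
  obtain ⟨y, hy⟩ := Matrix.mulVec_surjective_iff_isUnit.2 (isUnit_intersectionMatrix n)
    fun S => ConvexBody.supportHom (dotProductCLM (rayVec S.1)) (ConvexBody.ofFinset V hV)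
  refine ⟨y, ?_⟩
  have hsimp0 : ∀ S : Finset (Fin n × Bool),
      simp0 n S = ConvexBody.ofFinset (simplexVerts S) (simplexVerts_nonempty S) := fun S => by
    rw [ConvexBody.coe_ofFinset, coe_simplexVerts, simp0]
  simp_rw [hsimp0, ← ConvexBody.coe_ofFinset V hV]
  refine ConvexBody.add_sum_neg_smul_eq_sum_smul _ _ _ _ fun l => ?_
  obtain ⟨u, rfl⟩ := exists_eq_dotProductCLM l
  exact supportHom_eq_sum_simplex hV (fun w hw => subsingleton_maximizers_of_edges hedges hw) hy u
end
end
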